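/- arXiv:2211.02383 — 4 statements merged into one kernel-verified Lean document; each statement's English description precedes it below -/
import Mathlib

section
/- (Lemma 6, reverse transformation, sample version.) Let φ be a posterior family, f a test quantity, and define g(θ,y) := −f(θ,y). Then for all y ∈ Y, θ̃ ∈ Θ, M ∈ ℕ and i ∈ {0,…,M−1}: R_{φ,g}(i|θ̃,y) = 1 − R_{φ,f}(M − i − 1 | θ̃, y). -/
open MeasureTheory Filter Topology

noncomputable section

namespace SBC

variable {Θ Y : Type*} [MeasurableSpace Θ] [MeasurableSpace Y]

/-- Marginal density of the data: `π_marg(y) = ∫ obs(y|θ) prior(θ) dλΘ(θ)`. -/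
def marg (lΘ : Measure Θ) (prior : Θ → ℝ) (obs : Y → Θ → ℝ) (y : Y) : ℝ :=
  ∫ θ, obs y θ * prior θ ∂lΘ

/-- Posterior density: `π_post(θ|y) = obs(y|θ) prior(θ) / π_marg(y)`. -/
def post (lΘ : Measure Θ) (prior : Θ → ℝ) (obs : Y → Θ → ℝ) (θ : Θ) (y : Y) : ℝ :=
  obs y θ * prior θ / marg lΘ prior obs y

/-- CDF of the test quantity `f` under the density `φ(·|y)`:
`C_{φ,f}(s|y) = ∫ 1[f(θ,y) ≤ s] φ(θ|y) dλΘ(θ)`. -/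
def Cdf (lΘ : Measure Θ) (φ f : Θ → Y → ℝ) (s : ℝ) (y : Y) : ℝ :=
  ∫ θ, (if f θ y ≤ s then φ θ y else 0) ∂lΘ

/-- Tie probability of the test quantity `f` under the density `φ(·|y)`:
`D_{φ,f}(s|y) = ∫ 1[f(θ,y) = s] φ(θ|y) dλΘ(θ)`. -/
def Dtie (lΘ : Measure Θ) (φ f : Θ → Y → ℝ) (s : ℝ) (y : Y) : ℝ :=
  ∫ θ, (if f θ y = s then φ θ y else 0) ∂lΘ

/-- The family of densities `φ` has no ties w.r.t. `f`. -/
def NoTies (lΘ : Measure Θ) (φ f : Θ → Y → ℝ) : Prop :=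
  ∀ (θt : Θ) (y : Y), Dtie lΘ φ f (f θt y) y = 0

/-- The continuous rank CDF `r_{φ,f}(x | θ̃, y)`. -/
def contRank (lΘ : Measure Θ) (φ f : Θ → Y → ℝ) (x : ℝ) (θt : Θ) (y : Y) : ℝ :=
  if Dtie lΘ φ f (f θt y) y = 0 then
    (if Cdf lΘ φ f (f θt y) y ≤ x then 1 else 0)
  else
    min 1 (max 0 ((x - Cdf lΘ φ f (f θt y) y + Dtie lΘ φ f (f θt y) y) /
      Dtie lΘ φ f (f θt y) y))

/-- The continuous `q_{φ,f}(x|y)`: average of the continuous rank CDF over the true posterior. -/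
def qfun (lΘ : Measure Θ) (prior : Θ → ℝ) (obs : Y → Θ → ℝ) (φ f : Θ → Y → ℝ)
    (x : ℝ) (y : Y) : ℝ :=
  ∫ θt, contRank lΘ φ f x θt y * post lΘ prior obs θt y ∂lΘ

/-- `φ` passes continuous SBC w.r.t. `f`. -/
def PassesContSBC (lΘ : Measure Θ) (lY : Measure Y) (prior : Θ → ℝ)
    (obs : Y → Θ → ℝ) (φ f : Θ → Y → ℝ) : Prop :=
  ∀ x ∈ Set.Icc (0 : ℝ) 1,
    ∫ y, qfun lΘ prior obs φ f x y * marg lΘ prior obs y ∂lY = x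

/-- Number of posterior draws whose test-quantity value is strictly below that of `θt`. -/
def Nless (f : Θ → Y → ℝ) {M : ℕ} (θs : Fin M → Θ) (θt : Θ) (y : Y) : ℕ :=
  (Finset.univ.filter fun m => f (θs m) y < f θt y).card

/-- Number of posterior draws whose test-quantity value ties with that of `θt`. -/
def Neq (f : Θ → Y → ℝ) {M : ℕ} (θs : Fin M → Θ) (θt : Θ) (y : Y) : ℕ :=
  (Finset.univ.filter fun m => f (θs m) y = f θt y).card

/-- The measure on `Θ` with density `φ(·|y)` w.r.t. `lΘ`. -/
def postFamMeas (lΘ : Measure Θ) (φ : Θ → Y → ℝ) (y : Y) : Measure Θ :=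
  lΘ.withDensity fun θ => ENNReal.ofReal (φ θ y)

/-- The `M`-sample rank CDF `R_{φ,f}(i | θ̃, y) = Pr(N_total ≤ i)` for i.i.d. draws from `φ_y`. -/
def sampleRank (lΘ : Measure Θ) (φ f : Θ → Y → ℝ) (M i : ℕ) (θt : Θ) (y : Y) : ℝ :=
  ∫ θs : Fin M → Θ,
    min 1 (max 0 (((i : ℝ) + 1 - (Nless f θs θt y : ℝ)) / ((Neq f θs θt y : ℝ) + 1)))
    ∂(Measure.pi fun _ : Fin M => postFamMeas lΘ φ y)

/-- The `M`-sample `Q_{φ,f}(i|y)`: average of the sample rank CDF over the true posterior. -/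
def Qfun (lΘ : Measure Θ) (prior : Θ → ℝ) (obs : Y → Θ → ℝ)
    (φ f : Θ → Y → ℝ) (M i : ℕ) (y : Y) : ℝ :=
  ∫ θt, sampleRank lΘ φ f M i θt y * post lΘ prior obs θt y ∂lΘ

/-- `φ` passes `M`-sample SBC w.r.t. `f`. -/
def PassesSampleSBC (lΘ : Measure Θ) (lY : Measure Y) (prior : Θ → ℝ)
    (obs : Y → Θ → ℝ) (φ f : Θ → Y → ℝ) (M : ℕ) : Prop :=
  ∀ i < M, ∫ y, Qfun lΘ prior obs φ f M i y * marg lΘ prior obs y ∂lY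
    = ((i : ℝ) + 1) / ((M : ℝ) + 1)

/-
Negating the test quantity swaps "strictly below" with "strictly above" and keeps ties, so
`N_less(-f) = M - N_less(f) - N_eq(f)`. With `j = M - i - 1` this turns the clamped ratio
`(i + 1 - N_less(-f)) / (N_eq + 1)` into `1 - (j + 1 - N_less(f)) / (N_eq + 1)`, and clamping to
`[0, 1]` commutes with `t ↦ 1 - t`. Integrating against the probability measure `φ_y^{⊗M}` gives
the claim.
-/

lemma min_one_max_zero_one_sub (t : ℝ) : min 1 (max 0 (1 - t)) = 1 - min 1 (max 0 t) := by
  grind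

lemma isProbabilityMeasure_withDensity_ofReal {α : Type*} [MeasurableSpace α] {μ : Measure α}
    {g : α → ℝ} (hg_nonneg : ∀ a, 0 ≤ g a) (hg_int : ∫ a, g a ∂μ = 1) :
    IsProbabilityMeasure (μ.withDensity fun a => ENNReal.ofReal (g a)) := by
  have hg : Integrable g μ := Integrable.of_integral_ne_zero (by rw [hg_int]; exact one_ne_zero)
  constructor
  rw [withDensity_apply _ MeasurableSet.univ, setLIntegral_univ,
    ← ofReal_integral_eq_lintegral_ofReal hg (.of_forall hg_nonneg), hg_int, ENNReal.ofReal_one]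

lemma measurable_card_filter {ι α : Type*} [Fintype ι] [MeasurableSpace α] {p : α → Prop}
    [DecidablePred p] (hp : MeasurableSet {a | p a}) :
    Measurable fun x : ι → α => (Finset.univ.filter fun m => p (x m)).card := by
  simp only [Finset.card_filter]
  exact Finset.measurable_sum _ fun m _ =>
    Measurable.ite (hp.preimage (measurable_pi_apply m)) measurable_const measurable_const

section Rank

variable {M : ℕ} (f : Θ → Y → ℝ) (θs : Fin M → Θ) (θt : Θ) (y : Y)

omit [MeasurableSpace Θ] [MeasurableSpace Y]

lemma Nless_neg_add_Nless_add_Neq :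
    Nless (fun θ y' => -f θ y') θs θt y + Nless f θs θt y + Neq f θs θt y = M := by
  simp only [Nless, Neq, Finset.card_filter, ← Finset.sum_add_distrib]
  refine (Finset.sum_congr rfl fun m _ => ?_ : _ = ∑ _m : Fin M, 1).trans (by simp)
  rcases lt_trichotomy (f (θs m) y) (f θt y) with h | h | h
  · simp [h, h.ne, h.not_gt]
  · simp [h]
  · simp [h, h.ne', h.not_gt]

lemma Neq_neg : Neq (fun θ y' => -f θ y') θs θt y = Neq f θs θt y := by
  simp only [Neq, neg_inj]

/-- The integrand of `sampleRank`. -/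
def rankIntegrand (i : ℕ) : ℝ :=
  min 1 (max 0 (((i : ℝ) + 1 - (Nless f θs θt y : ℝ)) / ((Neq f θs θt y : ℝ) + 1)))

lemma rankIntegrand_neg {i : ℕ} (hi : i < M) :
    rankIntegrand (fun θ y' => -f θ y') θs θt y i = 1 - rankIntegrand f θs θt y (M - i - 1) := by
  have hcount : (Nless (fun θ y' => -f θ y') θs θt y : ℝ)
      = M - Nless f θs θt y - Neq f θs θt y := by
    rw [eq_sub_iff_add_eq, eq_sub_iff_add_eq, add_right_comm]
    exact_mod_cast Nless_neg_add_Nless_add_Neq f θs θt y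
  have hj : ((M - i - 1 : ℕ) : ℝ) + 1 = M - i := by
    rw [Nat.sub_sub, Nat.cast_sub hi]
    push_cast
    ring
  have hden : (0 : ℝ) < Neq f θs θt y + 1 := by positivity
  rw [rankIntegrand, rankIntegrand, hcount, Neq_neg, hj, ← min_one_max_zero_one_sub]
  congr 3
  field_simp
  ring

lemma abs_rankIntegrand_le_one (i : ℕ) : |rankIntegrand f θs θt y i| ≤ 1 :=
  abs_le.2 ⟨(neg_one_lt_zero.trans_le (le_min zero_le_one (le_max_left _ _))).le, min_le_left _ _⟩

end Rank

omit [MeasurableSpace Y] in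
lemma measurable_rankIntegrand {M : ℕ} {f : Θ → Y → ℝ} {y : Y} (hf : Measurable fun θ => f θ y)
    (θt : Θ) (i : ℕ) :
    Measurable fun θs : Fin M → Θ => rankIntegrand f θs θt y i := by
  have hless : Measurable fun θs : Fin M → Θ => Nless f θs θt y :=
    measurable_card_filter (measurableSet_lt hf measurable_const)
  have heq : Measurable fun θs : Fin M → Θ => Neq f θs θt y :=
    measurable_card_filter (measurableSet_eq_fun hf measurable_const)
  exact measurable_const.min <| measurable_const.max <|
    (measurable_const.sub (measurable_from_nat.comp hless)).div
      ((measurable_from_nat.comp heq).add measurable_const)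

theorem reverse_transformation_sample_version_general
    (lΘ : Measure Θ)
    (φ f : Θ → Y → ℝ)
    (hφ_nonneg : ∀ (θ : Θ) (y : Y), 0 ≤ φ θ y)
    (hφ_int : ∀ y, ∫ θ, φ θ y ∂lΘ = 1)
    (hf_meas : Measurable (Function.uncurry f))
    (y : Y) (θt : Θ) (M i : ℕ) (hi : i < M) :
    sampleRank lΘ φ (fun θ y' => - f θ y') M i θt y
      = 1 - sampleRank lΘ φ f M (M - i - 1) θt y := by
  have hprob : IsProbabilityMeasure (postFamMeas lΘ φ y) :=
    isProbabilityMeasure_withDensity_ofReal (fun θ => hφ_nonneg θ y) (hφ_int y)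
  have hint : Integrable (fun θs => rankIntegrand f θs θt y (M - i - 1))
      (Measure.pi fun _ : Fin M => postFamMeas lΘ φ y) :=
    .of_bound (measurable_rankIntegrand hf_meas.of_uncurry_right θt _).aestronglyMeasurable 1
      (.of_forall fun θs => abs_rankIntegrand_le_one f θs θt y _)
  change ∫ θs, rankIntegrand _ θs θt y i ∂_ = 1 - ∫ θs, rankIntegrand f θs θt y _ ∂_
  simp only [rankIntegrand_neg f _ θt y hi]
  rw [integral_sub (integrable_const 1) hint, integral_const, probReal_univ, one_smul]

theorem reverse_transformation_sample_version
    (lΘ : Measure Θ) (lY : Measure Y) [SigmaFinite lΘ] [SigmaFinite lY]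
    (prior : Θ → ℝ) (obs : Y → Θ → ℝ) (φ f : Θ → Y → ℝ)
    (hprior_meas : Measurable prior) (hprior_nonneg : ∀ θ, 0 ≤ prior θ)
    (hprior_int : ∫ θ, prior θ ∂lΘ = 1)
    (hobs_meas : Measurable (Function.uncurry obs))
    (hobs_nonneg : ∀ (y : Y) (θ : Θ), 0 ≤ obs y θ)
    (hobs_int : ∀ θ, ∫ y, obs y θ ∂lY = 1)
    (hmarg_pos : ∀ y, 0 < marg lΘ prior obs y)
    (hφ_meas : Measurable (Function.uncurry φ))
    (hφ_nonneg : ∀ (θ : Θ) (y : Y), 0 ≤ φ θ y)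
    (hφ_int : ∀ y, ∫ θ, φ θ y ∂lΘ = 1)
    (hf_meas : Measurable (Function.uncurry f))
    (y : Y) (θt : Θ) (M i : ℕ) (hi : i < M) :
    sampleRank lΘ φ (fun θ y' => - f θ y') M i θt y
      = 1 - sampleRank lΘ φ f M (M - i - 1) θt y :=
  reverse_transformation_sample_version_general lΘ φ f hφ_nonneg hφ_int hf_meas y θt M i hi

end SBC
end
end

section
/- (Theorem 8, monotonic transformations.) Let φ be a posterior family, let f and g be test quantities, and let (h_y)_{y∈Y} be a family of functions h_y : ℝ → ℝ such that f(θ,y) = h_y(g(θ,y)) for all θ ∈ Θ, y ∈ Y. If either h_y is strictly increasing for every y ∈ Y, or h_y is strictly decreasing for every y ∈ Y, then: (1) φ passes continuous SBC with respect to f if and only if φ passes continuous SBC with respect to g; (2) for every M ∈ ℕ, φ passes M-sample SBC with respect to f if and only if φ passes M-sample SBC with respect to g. -/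
open MeasureTheory Filter Topology

noncomputable section

namespace SBC

variable {Θ Y : Type*} [MeasurableSpace Θ] [MeasurableSpace Y]

lemma clamp_nonneg (t : ℝ) : 0 ≤ min 1 (max 0 t) :=
  le_min zero_le_one (le_max_left _ _)

lemma clamp_le_one (t : ℝ) : min 1 (max 0 t) ≤ 1 := min_le_left _ _

lemma clamp_mono {t t' : ℝ} (h : t ≤ t') : min 1 (max 0 t) ≤ min 1 (max 0 t') := by
  gcongr

lemma one_sub_clamp (t : ℝ) : 1 - min 1 (max 0 t) = min 1 (max 0 (1 - t)) := by
  rcases le_total t 0 with h | h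
  · rw [max_eq_left h, min_eq_right (zero_le_one), max_eq_right (by linarith),
      min_eq_left (by linarith)]
    ring
  · rcases le_total 1 t with h2 | h2
    · rw [max_eq_right h, min_eq_left h2, max_eq_left (by linarith),
        min_eq_right zero_le_one]
      ring
    · rw [max_eq_right h, min_eq_right h2, max_eq_right (by linarith),
        min_eq_right (by linarith)]

lemma integrable_of_integral_ne_zero {α : Type*} [MeasurableSpace α] {μ : Measure α}
    {f : α → ℝ} (h : ∫ a, f a ∂μ ≠ 0) : Integrable f μ := by
  by_contra hc
  exact h (integral_undef hc)


section ModelFacts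

variable (lΘ : Measure Θ) (lY : Measure Y)

lemma marg_measurable (prior : Θ → ℝ) (obs : Y → Θ → ℝ) [SFinite lΘ]
    (hobs_meas : Measurable (Function.uncurry obs)) (hprior_meas : Measurable prior) :
    Measurable (marg lΘ prior obs) := by
  have hsm : StronglyMeasurable fun p : Y × Θ => obs p.1 p.2 * prior p.2 :=
    (hobs_meas.mul (hprior_meas.comp measurable_snd)).stronglyMeasurable
  exact hsm.integral_prod_right'.measurable

lemma integrable_lik (prior : Θ → ℝ) (obs : Y → Θ → ℝ)
    (hmarg_pos : ∀ y, 0 < marg lΘ prior obs y) (y : Y) :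
    Integrable (fun θ => obs y θ * prior θ) lΘ :=
  integrable_of_integral_ne_zero (ne_of_gt (hmarg_pos y))

lemma post_nonneg (prior : Θ → ℝ) (obs : Y → Θ → ℝ)
    (hprior_nonneg : ∀ θ, 0 ≤ prior θ) (hobs_nonneg : ∀ y θ, 0 ≤ obs y θ)
    (hmarg_pos : ∀ y, 0 < marg lΘ prior obs y) (θ : Θ) (y : Y) :
    0 ≤ post lΘ prior obs θ y :=
  div_nonneg (mul_nonneg (hobs_nonneg y θ) (hprior_nonneg θ)) (hmarg_pos y).le

lemma integrable_post (prior : Θ → ℝ) (obs : Y → Θ → ℝ)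
    (hmarg_pos : ∀ y, 0 < marg lΘ prior obs y) (y : Y) :
    Integrable (fun θ => post lΘ prior obs θ y) lΘ := by
  have := (integrable_lik lΘ prior obs hmarg_pos y).mul_const (marg lΘ prior obs y)⁻¹
  simpa [post, div_eq_mul_inv] using this

lemma integral_post (prior : Θ → ℝ) (obs : Y → Θ → ℝ)
    (hmarg_pos : ∀ y, 0 < marg lΘ prior obs y) (y : Y) :
    ∫ θ, post lΘ prior obs θ y ∂lΘ = 1 := by
  simp only [post, div_eq_mul_inv, integral_mul_const]
  exact mul_inv_cancel₀ (hmarg_pos y).ne'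

lemma post_measurable (prior : Θ → ℝ) (obs : Y → Θ → ℝ) [SFinite lΘ]
    (hobs_meas : Measurable (Function.uncurry obs)) (hprior_meas : Measurable prior) :
    Measurable fun p : Θ × Y => post lΘ prior obs p.1 p.2 := by
  have h1 : Measurable fun p : Θ × Y => obs p.2 p.1 * prior p.1 :=
    (hobs_meas.comp (measurable_snd.prodMk measurable_fst)).mul
      (hprior_meas.comp measurable_fst)
  exact h1.div ((marg_measurable lΘ prior obs hobs_meas hprior_meas).comp measurable_snd)

lemma lintegral_marg (prior : Θ → ℝ) (obs : Y → Θ → ℝ)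
    [SigmaFinite lΘ] [SigmaFinite lY]
    (hprior_meas : Measurable prior) (hprior_nonneg : ∀ θ, 0 ≤ prior θ)
    (hprior_int : ∫ θ, prior θ ∂lΘ = 1)
    (hobs_meas : Measurable (Function.uncurry obs))
    (hobs_nonneg : ∀ y θ, 0 ≤ obs y θ) (hobs_int : ∀ θ, ∫ y, obs y θ ∂lY = 1)
    (hmarg_pos : ∀ y, 0 < marg lΘ prior obs y) :
    ∫⁻ y, ENNReal.ofReal (marg lΘ prior obs y) ∂lY = 1 := by
  have hjm : Measurable fun p : Y × Θ => obs p.1 p.2 * prior p.2 :=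
    hobs_meas.mul (hprior_meas.comp measurable_snd)
  calc ∫⁻ y, ENNReal.ofReal (marg lΘ prior obs y) ∂lY
      = ∫⁻ y, ∫⁻ θ, ENNReal.ofReal (obs y θ * prior θ) ∂lΘ ∂lY := by
        refine lintegral_congr fun y => ?_
        exact ofReal_integral_eq_lintegral_ofReal (integrable_lik lΘ prior obs hmarg_pos y)
          (Filter.Eventually.of_forall fun θ =>
            mul_nonneg (hobs_nonneg y θ) (hprior_nonneg θ))
    _ = ∫⁻ θ, ∫⁻ y, ENNReal.ofReal (obs y θ * prior θ) ∂lY ∂lΘ := by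
        exact lintegral_lintegral_swap (hjm.ennreal_ofReal.aemeasurable)
    _ = ∫⁻ θ, ENNReal.ofReal (prior θ) ∂lΘ := by
        refine lintegral_congr fun θ => ?_
        have hobsint : Integrable (fun y => obs y θ) lY :=
          integrable_of_integral_ne_zero (by rw [hobs_int θ]; norm_num)
        calc ∫⁻ y, ENNReal.ofReal (obs y θ * prior θ) ∂lY
            = ∫⁻ y, ENNReal.ofReal (obs y θ) * ENNReal.ofReal (prior θ) ∂lY := by
              refine lintegral_congr fun y => ?_
              exact ENNReal.ofReal_mul (hobs_nonneg y θ)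
          _ = (∫⁻ y, ENNReal.ofReal (obs y θ) ∂lY) * ENNReal.ofReal (prior θ) := by
              exact lintegral_mul_const _ (hobs_meas.comp
                (measurable_id.prodMk measurable_const)).ennreal_ofReal
          _ = ENNReal.ofReal (prior θ) := by
              rw [← ofReal_integral_eq_lintegral_ofReal hobsint
                (Filter.Eventually.of_forall fun y => hobs_nonneg y θ), hobs_int θ]
              simp
    _ = 1 := by
        have hprior_integrable : Integrable prior lΘ :=
          integrable_of_integral_ne_zero (by rw [hprior_int]; norm_num)
        rw [← ofReal_integral_eq_lintegral_ofReal hprior_integrable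
          (Filter.Eventually.of_forall hprior_nonneg), hprior_int]
        simp

lemma integrable_marg (prior : Θ → ℝ) (obs : Y → Θ → ℝ)
    [SigmaFinite lΘ] [SigmaFinite lY]
    (hprior_meas : Measurable prior) (hprior_nonneg : ∀ θ, 0 ≤ prior θ)
    (hprior_int : ∫ θ, prior θ ∂lΘ = 1)
    (hobs_meas : Measurable (Function.uncurry obs))
    (hobs_nonneg : ∀ y θ, 0 ≤ obs y θ) (hobs_int : ∀ θ, ∫ y, obs y θ ∂lY = 1)
    (hmarg_pos : ∀ y, 0 < marg lΘ prior obs y) :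
    Integrable (marg lΘ prior obs) lY := by
  refine ⟨(marg_measurable lΘ prior obs hobs_meas hprior_meas).aestronglyMeasurable, ?_⟩
  rw [hasFiniteIntegral_iff_norm]
  have : ∫⁻ y, ENNReal.ofReal ‖marg lΘ prior obs y‖ ∂lY = 1 := by
    rw [← lintegral_marg lΘ lY prior obs hprior_meas hprior_nonneg hprior_int hobs_meas
      hobs_nonneg hobs_int hmarg_pos]
    exact lintegral_congr fun y => by rw [Real.norm_of_nonneg (hmarg_pos y).le]
  rw [this]; exact ENNReal.one_lt_top

lemma integral_marg (prior : Θ → ℝ) (obs : Y → Θ → ℝ)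
    [SigmaFinite lΘ] [SigmaFinite lY]
    (hprior_meas : Measurable prior) (hprior_nonneg : ∀ θ, 0 ≤ prior θ)
    (hprior_int : ∫ θ, prior θ ∂lΘ = 1)
    (hobs_meas : Measurable (Function.uncurry obs))
    (hobs_nonneg : ∀ y θ, 0 ≤ obs y θ) (hobs_int : ∀ θ, ∫ y, obs y θ ∂lY = 1)
    (hmarg_pos : ∀ y, 0 < marg lΘ prior obs y) :
    ∫ y, marg lΘ prior obs y ∂lY = 1 := by
  rw [integral_eq_lintegral_of_nonneg_ae (Filter.Eventually.of_forall fun y => (hmarg_pos y).le)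
    (marg_measurable lΘ prior obs hobs_meas hprior_meas).aestronglyMeasurable,
    lintegral_marg lΘ lY prior obs hprior_meas hprior_nonneg hprior_int hobs_meas
      hobs_nonneg hobs_int hmarg_pos]
  simp

end ModelFacts

section CdfFacts

set_option linter.unusedSectionVars false

/-- Strict-inequality CDF, an auxiliary quantity. -/
def CdfLt (lΘ : Measure Θ) (φ u : Θ → Y → ℝ) (s : ℝ) (y : Y) : ℝ :=
  ∫ θ, (if u θ y < s then φ θ y else 0) ∂lΘ

lemma meas_slice {u : Θ → Y → ℝ} (hu : Measurable (Function.uncurry u)) (y : Y) :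
    Measurable fun θ => u θ y :=
  hu.comp (measurable_id.prodMk measurable_const)

lemma integrable_phi {lΘ : Measure Θ} {φ : Θ → Y → ℝ}
    (hφ_int : ∀ y, ∫ θ, φ θ y ∂lΘ = 1) (y : Y) :
    Integrable (fun θ => φ θ y) lΘ :=
  integrable_of_integral_ne_zero (by rw [hφ_int y]; norm_num)

lemma integrable_ite_phi {lΘ : Measure Θ} {φ : Θ → Y → ℝ} {p : Θ → Prop} [DecidablePred p]
    (hp : MeasurableSet {θ | p θ})
    (hφ_meas : Measurable (Function.uncurry φ)) (hφ_nonneg : ∀ θ y, 0 ≤ φ θ y)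
    (hφ_int : ∀ y, ∫ θ, φ θ y ∂lΘ = 1) (y : Y) :
    Integrable (fun θ => if p θ then φ θ y else 0) lΘ := by
  refine (integrable_phi hφ_int y).mono'
    ((Measurable.ite hp (meas_slice hφ_meas y) measurable_const).aestronglyMeasurable)
    (Filter.Eventually.of_forall fun θ => ?_)
  by_cases hθ : p θ <;> simp [hθ, abs_of_nonneg (hφ_nonneg θ y), hφ_nonneg θ y]

variable {lΘ : Measure Θ} [SigmaFinite lΘ] {φ u : Θ → Y → ℝ}

lemma integrable_cdf_slice (hφ_meas : Measurable (Function.uncurry φ))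
    (hφ_nonneg : ∀ θ y, 0 ≤ φ θ y) (hφ_int : ∀ y, ∫ θ, φ θ y ∂lΘ = 1)
    (hu : Measurable (Function.uncurry u)) (s : ℝ) (y : Y) :
    Integrable (fun θ => if u θ y ≤ s then φ θ y else 0) lΘ :=
  integrable_ite_phi (measurableSet_le (meas_slice hu y) measurable_const)
    hφ_meas hφ_nonneg hφ_int y

lemma integrable_cdfLt_slice (hφ_meas : Measurable (Function.uncurry φ))
    (hφ_nonneg : ∀ θ y, 0 ≤ φ θ y) (hφ_int : ∀ y, ∫ θ, φ θ y ∂lΘ = 1)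
    (hu : Measurable (Function.uncurry u)) (s : ℝ) (y : Y) :
    Integrable (fun θ => if u θ y < s then φ θ y else 0) lΘ :=
  integrable_ite_phi (measurableSet_lt (meas_slice hu y) measurable_const)
    hφ_meas hφ_nonneg hφ_int y

lemma integrable_dtie_slice (hφ_meas : Measurable (Function.uncurry φ))
    (hφ_nonneg : ∀ θ y, 0 ≤ φ θ y) (hφ_int : ∀ y, ∫ θ, φ θ y ∂lΘ = 1)
    (hu : Measurable (Function.uncurry u)) (s : ℝ) (y : Y) :
    Integrable (fun θ => if u θ y = s then φ θ y else 0) lΘ :=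
  integrable_ite_phi (measurableSet_eq_fun (meas_slice hu y) measurable_const)
    hφ_meas hφ_nonneg hφ_int y

lemma Cdf_nonneg (hφ_nonneg : ∀ θ y, 0 ≤ φ θ y) (s : ℝ) (y : Y) : 0 ≤ Cdf lΘ φ u s y :=
  integral_nonneg fun θ => by by_cases hθ : u θ y ≤ s <;> simp [hθ, hφ_nonneg θ y]

lemma Dtie_nonneg (hφ_nonneg : ∀ θ y, 0 ≤ φ θ y) (s : ℝ) (y : Y) : 0 ≤ Dtie lΘ φ u s y :=
  integral_nonneg fun θ => by by_cases hθ : u θ y = s <;> simp [hθ, hφ_nonneg θ y]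

lemma Cdf_le_one (hφ_meas : Measurable (Function.uncurry φ))
    (hφ_nonneg : ∀ θ y, 0 ≤ φ θ y) (hφ_int : ∀ y, ∫ θ, φ θ y ∂lΘ = 1)
    (hu : Measurable (Function.uncurry u)) (s : ℝ) (y : Y) : Cdf lΘ φ u s y ≤ 1 := by
  rw [show (1:ℝ) = ∫ θ, φ θ y ∂lΘ from (hφ_int y).symm]
  refine integral_mono (integrable_cdf_slice hφ_meas hφ_nonneg hφ_int hu s y)
    (integrable_phi hφ_int y) fun θ => ?_
  by_cases hθ : u θ y ≤ s <;> simp [hθ, hφ_nonneg θ y]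

lemma Cdf_eq_CdfLt_add_Dtie (hφ_meas : Measurable (Function.uncurry φ))
    (hφ_nonneg : ∀ θ y, 0 ≤ φ θ y) (hφ_int : ∀ y, ∫ θ, φ θ y ∂lΘ = 1)
    (hu : Measurable (Function.uncurry u)) (s : ℝ) (y : Y) :
    Cdf lΘ φ u s y = CdfLt lΘ φ u s y + Dtie lΘ φ u s y := by
  rw [CdfLt, Dtie, ← integral_add (integrable_cdfLt_slice hφ_meas hφ_nonneg hφ_int hu s y)
    (integrable_dtie_slice hφ_meas hφ_nonneg hφ_int hu s y)]
  refine integral_congr_ae (Filter.Eventually.of_forall fun θ => ?_)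
  rcases lt_trichotomy (u θ y) s with hθ | hθ | hθ
  · simp [hθ.le, hθ, hθ.ne]
  · simp [hθ.le, hθ, lt_irrefl]
  · simp [not_le.mpr hθ, not_lt.mpr hθ.le, hθ.ne']

lemma Cdf_measurable2 (hφ_meas : Measurable (Function.uncurry φ))
    (hu : Measurable (Function.uncurry u)) :
    Measurable fun p : ℝ × Y => Cdf lΘ φ u p.1 p.2 := by
  have m11 : Measurable fun q : (ℝ × Y) × Θ => q.1.1 := measurable_fst.fst
  have m12 : Measurable fun q : (ℝ × Y) × Θ => q.1.2 := measurable_fst.snd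
  have h1 : Measurable fun q : (ℝ × Y) × Θ => u q.2 q.1.2 :=
    hu.comp (measurable_snd.prodMk m12)
  have h2 : Measurable fun q : (ℝ × Y) × Θ => φ q.2 q.1.2 :=
    hφ_meas.comp (measurable_snd.prodMk m12)
  have hsm : StronglyMeasurable fun q : (ℝ × Y) × Θ =>
      if u q.2 q.1.2 ≤ q.1.1 then φ q.2 q.1.2 else 0 :=
    (Measurable.ite (measurableSet_le h1 m11) h2 measurable_const).stronglyMeasurable
  exact hsm.integral_prod_right'.measurable

lemma Dtie_measurable2 (hφ_meas : Measurable (Function.uncurry φ))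
    (hu : Measurable (Function.uncurry u)) :
    Measurable fun p : ℝ × Y => Dtie lΘ φ u p.1 p.2 := by
  have m11 : Measurable fun q : (ℝ × Y) × Θ => q.1.1 := measurable_fst.fst
  have m12 : Measurable fun q : (ℝ × Y) × Θ => q.1.2 := measurable_fst.snd
  have h1 : Measurable fun q : (ℝ × Y) × Θ => u q.2 q.1.2 :=
    hu.comp (measurable_snd.prodMk m12)
  have h2 : Measurable fun q : (ℝ × Y) × Θ => φ q.2 q.1.2 :=
    hφ_meas.comp (measurable_snd.prodMk m12)
  have hsm : StronglyMeasurable fun q : (ℝ × Y) × Θ =>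
      if u q.2 q.1.2 = q.1.1 then φ q.2 q.1.2 else 0 :=
    (Measurable.ite (measurableSet_eq_fun h1 m11) h2 measurable_const).stronglyMeasurable
  exact hsm.integral_prod_right'.measurable

lemma contRank_measurable (hφ_meas : Measurable (Function.uncurry φ))
    (hu : Measurable (Function.uncurry u)) (x : ℝ) :
    Measurable fun p : Θ × Y => contRank lΘ φ u x p.1 p.2 := by
  have hC : Measurable fun p : Θ × Y => Cdf lΘ φ u (u p.1 p.2) p.2 :=
    (Cdf_measurable2 hφ_meas hu).comp (hu.prodMk measurable_snd)
  have hD : Measurable fun p : Θ × Y => Dtie lΘ φ u (u p.1 p.2) p.2 :=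
    (Dtie_measurable2 hφ_meas hu).comp (hu.prodMk measurable_snd)
  unfold contRank
  refine Measurable.ite (measurableSet_eq_fun hD measurable_const) ?_ ?_
  · exact Measurable.ite (measurableSet_le hC measurable_const) measurable_const
      measurable_const
  · exact measurable_const.min (measurable_const.max
      (((measurable_const.sub hC).add hD).div hD))

lemma contRank_nonneg (x : ℝ) (θt : Θ) (y : Y) : 0 ≤ contRank lΘ φ u x θt y := by
  unfold contRank
  split_ifs
  · norm_num
  · norm_num
  · exact clamp_nonneg _

lemma contRank_le_one (x : ℝ) (θt : Θ) (y : Y) : contRank lΘ φ u x θt y ≤ 1 := by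
  unfold contRank
  split_ifs
  · norm_num
  · norm_num
  · exact clamp_le_one _

end CdfFacts


section Reversal

set_option linter.unusedSectionVars false

variable {lΘ : Measure Θ} [SigmaFinite lΘ] {φ f g : Θ → Y → ℝ}

lemma Dtie_rev (hfg : ∀ θ θ' y, f θ y ≤ f θ' y ↔ g θ' y ≤ g θ y) (θt : Θ) (y : Y) :
    Dtie lΘ φ f (f θt y) y = Dtie lΘ φ g (g θt y) y := by
  unfold Dtie
  refine integral_congr_ae (Filter.Eventually.of_forall fun θ => ?_)
  have hiff : (f θ y = f θt y) ↔ (g θ y = g θt y) := by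
    constructor
    · intro he
      exact le_antisymm ((hfg θt θ y).mp he.ge) ((hfg θ θt y).mp he.le)
    · intro he
      exact le_antisymm ((hfg θ θt y).mpr he.ge) ((hfg θt θ y).mpr he.le)
  dsimp only
  rw [if_congr hiff rfl rfl]

lemma Cdf_rev (hφ_meas : Measurable (Function.uncurry φ))
    (hφ_nonneg : ∀ θ y, 0 ≤ φ θ y) (hφ_int : ∀ y, ∫ θ, φ θ y ∂lΘ = 1)
    (hg_meas : Measurable (Function.uncurry g))
    (hfg : ∀ θ θ' y, f θ y ≤ f θ' y ↔ g θ' y ≤ g θ y) (θt : Θ) (y : Y) :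
    Cdf lΘ φ f (f θt y) y = 1 - Cdf lΘ φ g (g θt y) y + Dtie lΘ φ g (g θt y) y := by
  have h1 : Cdf lΘ φ f (f θt y) y
      = ∫ θ, (φ θ y - (if g θ y < g θt y then φ θ y else 0)) ∂lΘ := by
    unfold Cdf
    refine integral_congr_ae (Filter.Eventually.of_forall fun θ => ?_)
    have hiff : f θ y ≤ f θt y ↔ g θt y ≤ g θ y := hfg θ θt y
    dsimp only
    by_cases hc : g θt y ≤ g θ y
    · rw [if_pos (hiff.mpr hc), if_neg (not_lt.mpr hc)]; ring
    · rw [if_neg (fun hh => hc (hiff.mp hh)), if_pos (not_le.mp hc)]; ring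
  rw [h1, integral_sub (integrable_phi hφ_int y)
    (integrable_cdfLt_slice hφ_meas hφ_nonneg hφ_int hg_meas (g θt y) y), hφ_int y]
  have h2 := Cdf_eq_CdfLt_add_Dtie hφ_meas hφ_nonneg hφ_int hg_meas (g θt y) y
  have h3 : (∫ θ, (if g θ y < g θt y then φ θ y else 0) ∂lΘ) = CdfLt lΘ φ g (g θt y) y := rfl
  rw [h3]
  linarith

lemma contRank_rev_lower (hφ_meas : Measurable (Function.uncurry φ))
    (hφ_nonneg : ∀ θ y, 0 ≤ φ θ y) (hφ_int : ∀ y, ∫ θ, φ θ y ∂lΘ = 1)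
    (hg_meas : Measurable (Function.uncurry g))
    (hfg : ∀ θ θ' y, f θ y ≤ f θ' y ↔ g θ' y ≤ g θ y) (x : ℝ) (θt : Θ) (y : Y) :
    1 - contRank lΘ φ g (1 - x) θt y ≤ contRank lΘ φ f x θt y := by
  have hd := Dtie_rev (lΘ := lΘ) (φ := φ) hfg θt y
  have hc := Cdf_rev hφ_meas hφ_nonneg hφ_int hg_meas hfg θt y
  set cg := Cdf lΘ φ g (g θt y) y with hcg
  set dg := Dtie lΘ φ g (g θt y) y with hdg
  unfold contRank
  rw [hd, hc]
  by_cases h0 : dg = 0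
  · rw [if_pos h0, if_pos h0]
    by_cases h1 : cg ≤ 1 - x
    · rw [if_pos h1]
      have : (0:ℝ) ≤ if 1 - cg + dg ≤ x then 1 else 0 := by positivity
      linarith
    · rw [if_neg h1, if_pos (by rw [h0]; push_neg at h1; linarith)]
      norm_num
  · rw [if_neg h0, if_neg h0]
    have hdpos : 0 < dg := lt_of_le_of_ne (Dtie_nonneg hφ_nonneg _ _) (Ne.symm h0)
    rw [one_sub_clamp]
    have harg : 1 - (1 - x - cg + dg) / dg = (x - (1 - cg + dg) + dg) / dg := by
      field_simp
      ring
    rw [harg]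

lemma contRank_rev_upper (hφ_meas : Measurable (Function.uncurry φ))
    (hφ_nonneg : ∀ θ y, 0 ≤ φ θ y) (hφ_int : ∀ y, ∫ θ, φ θ y ∂lΘ = 1)
    (hg_meas : Measurable (Function.uncurry g))
    (hfg : ∀ θ θ' y, f θ y ≤ f θ' y ↔ g θ' y ≤ g θ y) {x s' : ℝ} (hs' : s' < 1 - x)
    (θt : Θ) (y : Y) :
    contRank lΘ φ f x θt y ≤ 1 - contRank lΘ φ g s' θt y := by
  have hd := Dtie_rev (lΘ := lΘ) (φ := φ) hfg θt y
  have hc := Cdf_rev hφ_meas hφ_nonneg hφ_int hg_meas hfg θt y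
  set cg := Cdf lΘ φ g (g θt y) y with hcg
  set dg := Dtie lΘ φ g (g θt y) y with hdg
  unfold contRank
  rw [hd, hc]
  by_cases h0 : dg = 0
  · rw [if_pos h0, if_pos h0]
    by_cases h1 : 1 - cg + dg ≤ x
    · rw [if_pos h1, if_neg (by rw [h0] at h1; push_neg; linarith)]
      norm_num
    · rw [if_neg h1]
      have : (if cg ≤ s' then (1:ℝ) else 0) ≤ 1 := by
        split_ifs <;> norm_num
      linarith
  · rw [if_neg h0, if_neg h0]
    have hdpos : 0 < dg := lt_of_le_of_ne (Dtie_nonneg hφ_nonneg _ _) (Ne.symm h0)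
    rw [one_sub_clamp]
    refine clamp_mono ?_
    have harg : 1 - (s' - cg + dg) / dg = (cg - s') / dg := by
      field_simp
      ring
    rw [harg]
    have hnum : x - (1 - cg + dg) + dg ≤ cg - s' := by linarith
    exact div_le_div_of_nonneg_right hnum hdpos.le

lemma contRank_one (hφ_meas : Measurable (Function.uncurry φ))
    (hφ_nonneg : ∀ θ y, 0 ≤ φ θ y) (hφ_int : ∀ y, ∫ θ, φ θ y ∂lΘ = 1)
    (hf_meas : Measurable (Function.uncurry f)) (θt : Θ) (y : Y) :
    contRank lΘ φ f 1 θt y = 1 := by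
  have hcle := Cdf_le_one hφ_meas hφ_nonneg hφ_int hf_meas (f θt y) y
  unfold contRank
  by_cases h0 : Dtie lΘ φ f (f θt y) y = 0
  · rw [if_pos h0, if_pos hcle]
  · rw [if_neg h0]
    have hdpos : 0 < Dtie lΘ φ f (f θt y) y :=
      lt_of_le_of_ne (Dtie_nonneg hφ_nonneg _ _) (Ne.symm h0)
    have h1 : (1:ℝ) ≤ (1 - Cdf lΘ φ f (f θt y) y + Dtie lΘ φ f (f θt y) y)
        / Dtie lΘ φ f (f θt y) y := by
      rw [le_div_iff₀ hdpos, one_mul]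
      linarith
    rw [max_eq_right (le_trans zero_le_one h1), min_eq_left h1]

end Reversal


section QFacts

set_option linter.unusedSectionVars false

variable {lΘ : Measure Θ} {lY : Measure Y} [SigmaFinite lΘ] [SigmaFinite lY]
  {prior : Θ → ℝ} {obs : Y → Θ → ℝ} {φ f g : Θ → Y → ℝ}

lemma integrable_rank_post (hφ_meas : Measurable (Function.uncurry φ))
    (hφ_nonneg : ∀ θ y, 0 ≤ φ θ y)
    (hprior_meas : Measurable prior) (hprior_nonneg : ∀ θ, 0 ≤ prior θ)
    (hobs_meas : Measurable (Function.uncurry obs)) (hobs_nonneg : ∀ y θ, 0 ≤ obs y θ)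
    (hmarg_pos : ∀ y, 0 < marg lΘ prior obs y)
    (hu : Measurable (Function.uncurry f)) (x : ℝ) (y : Y) :
    Integrable (fun θt => contRank lΘ φ f x θt y * post lΘ prior obs θt y) lΘ := by
  refine (integrable_post lΘ prior obs hmarg_pos y).mono'
    ((((contRank_measurable hφ_meas hu x).comp
        (measurable_id.prodMk measurable_const)).mul
      ((post_measurable lΘ prior obs hobs_meas hprior_meas).comp
        (measurable_id.prodMk measurable_const))).aestronglyMeasurable)
    (Filter.Eventually.of_forall fun θt => ?_)
  rw [Real.norm_eq_abs, abs_of_nonneg (mul_nonneg (contRank_nonneg _ _ _)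
    (post_nonneg lΘ prior obs hprior_nonneg hobs_nonneg hmarg_pos θt y))]
  exact mul_le_of_le_one_left
    (post_nonneg lΘ prior obs hprior_nonneg hobs_nonneg hmarg_pos θt y)
    (contRank_le_one _ _ _)

lemma qfun_nonneg (hprior_nonneg : ∀ θ, 0 ≤ prior θ) (hobs_nonneg : ∀ y θ, 0 ≤ obs y θ)
    (hmarg_pos : ∀ y, 0 < marg lΘ prior obs y) (x : ℝ) (y : Y) :
    0 ≤ qfun lΘ prior obs φ f x y :=
  integral_nonneg fun θt => mul_nonneg (contRank_nonneg _ _ _)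
    (post_nonneg lΘ prior obs hprior_nonneg hobs_nonneg hmarg_pos θt y)

lemma qfun_le_one (hφ_meas : Measurable (Function.uncurry φ))
    (hφ_nonneg : ∀ θ y, 0 ≤ φ θ y)
    (hprior_meas : Measurable prior) (hprior_nonneg : ∀ θ, 0 ≤ prior θ)
    (hobs_meas : Measurable (Function.uncurry obs)) (hobs_nonneg : ∀ y θ, 0 ≤ obs y θ)
    (hmarg_pos : ∀ y, 0 < marg lΘ prior obs y)
    (hu : Measurable (Function.uncurry f)) (x : ℝ) (y : Y) :
    qfun lΘ prior obs φ f x y ≤ 1 := by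
  rw [show (1:ℝ) = ∫ θt, post lΘ prior obs θt y ∂lΘ from
    (integral_post lΘ prior obs hmarg_pos y).symm]
  refine integral_mono (integrable_rank_post hφ_meas hφ_nonneg hprior_meas hprior_nonneg
    hobs_meas hobs_nonneg hmarg_pos hu x y)
    (integrable_post lΘ prior obs hmarg_pos y) fun θt => ?_
  exact mul_le_of_le_one_left
    (post_nonneg lΘ prior obs hprior_nonneg hobs_nonneg hmarg_pos θt y)
    (contRank_le_one _ _ _)

lemma qfun_measurable (hφ_meas : Measurable (Function.uncurry φ))
    (hprior_meas : Measurable prior) (hobs_meas : Measurable (Function.uncurry obs))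
    (hu : Measurable (Function.uncurry f)) (x : ℝ) :
    Measurable fun y => qfun lΘ prior obs φ f x y := by
  have hsm : StronglyMeasurable fun q : Y × Θ =>
      contRank lΘ φ f x q.2 q.1 * post lΘ prior obs q.2 q.1 :=
    (((contRank_measurable hφ_meas hu x).comp (measurable_snd.prodMk measurable_fst)).mul
      ((post_measurable lΘ prior obs hobs_meas hprior_meas).comp
        (measurable_snd.prodMk measurable_fst))).stronglyMeasurable
  exact hsm.integral_prod_right'.measurable

lemma qfun_one (hφ_meas : Measurable (Function.uncurry φ))
    (hφ_nonneg : ∀ θ y, 0 ≤ φ θ y) (hφ_int : ∀ y, ∫ θ, φ θ y ∂lΘ = 1)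
    (hmarg_pos : ∀ y, 0 < marg lΘ prior obs y)
    (hf_meas : Measurable (Function.uncurry f)) (y : Y) :
    qfun lΘ prior obs φ f 1 y = 1 := by
  rw [show qfun lΘ prior obs φ f 1 y = ∫ θt, post lΘ prior obs θt y ∂lΘ from
    integral_congr_ae (Filter.Eventually.of_forall fun θt => by
      dsimp only
      rw [contRank_one hφ_meas hφ_nonneg hφ_int hf_meas θt y, one_mul])]
  exact integral_post lΘ prior obs hmarg_pos y

lemma qfun_rev_lower (hφ_meas : Measurable (Function.uncurry φ))
    (hφ_nonneg : ∀ θ y, 0 ≤ φ θ y) (hφ_int : ∀ y, ∫ θ, φ θ y ∂lΘ = 1)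
    (hprior_meas : Measurable prior) (hprior_nonneg : ∀ θ, 0 ≤ prior θ)
    (hobs_meas : Measurable (Function.uncurry obs)) (hobs_nonneg : ∀ y θ, 0 ≤ obs y θ)
    (hmarg_pos : ∀ y, 0 < marg lΘ prior obs y)
    (hf_meas : Measurable (Function.uncurry f)) (hg_meas : Measurable (Function.uncurry g))
    (hfg : ∀ θ θ' y, f θ y ≤ f θ' y ↔ g θ' y ≤ g θ y) (x : ℝ) (y : Y) :
    1 - qfun lΘ prior obs φ g (1 - x) y ≤ qfun lΘ prior obs φ f x y := by
  have hpost := integrable_post lΘ prior obs hmarg_pos y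
  have hrg := integrable_rank_post hφ_meas hφ_nonneg hprior_meas hprior_nonneg
    hobs_meas hobs_nonneg hmarg_pos hg_meas (1 - x) y
  have key : ∫ θt, (1 - contRank lΘ φ g (1 - x) θt y) * post lΘ prior obs θt y ∂lΘ
      = 1 - qfun lΘ prior obs φ g (1 - x) y := by
    have : ∀ θt, (1 - contRank lΘ φ g (1 - x) θt y) * post lΘ prior obs θt y
        = post lΘ prior obs θt y - contRank lΘ φ g (1 - x) θt y * post lΘ prior obs θt y :=
      fun θt => by ring
    rw [integral_congr_ae (Filter.Eventually.of_forall this), integral_sub hpost hrg,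
      integral_post lΘ prior obs hmarg_pos y]
    rfl
  rw [← key]
  refine integral_mono ((hpost.sub hrg).congr (Filter.Eventually.of_forall fun θt => by
      simp only [Pi.sub_apply]; ring))
    (integrable_rank_post hφ_meas hφ_nonneg hprior_meas hprior_nonneg
      hobs_meas hobs_nonneg hmarg_pos hf_meas x y) fun θt => ?_
  exact mul_le_mul_of_nonneg_right
    (contRank_rev_lower hφ_meas hφ_nonneg hφ_int hg_meas hfg x θt y)
    (post_nonneg lΘ prior obs hprior_nonneg hobs_nonneg hmarg_pos θt y)

lemma qfun_rev_upper (hφ_meas : Measurable (Function.uncurry φ))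
    (hφ_nonneg : ∀ θ y, 0 ≤ φ θ y) (hφ_int : ∀ y, ∫ θ, φ θ y ∂lΘ = 1)
    (hprior_meas : Measurable prior) (hprior_nonneg : ∀ θ, 0 ≤ prior θ)
    (hobs_meas : Measurable (Function.uncurry obs)) (hobs_nonneg : ∀ y θ, 0 ≤ obs y θ)
    (hmarg_pos : ∀ y, 0 < marg lΘ prior obs y)
    (hf_meas : Measurable (Function.uncurry f)) (hg_meas : Measurable (Function.uncurry g))
    (hfg : ∀ θ θ' y, f θ y ≤ f θ' y ↔ g θ' y ≤ g θ y) {x s' : ℝ} (hs' : s' < 1 - x) (y : Y) :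
    qfun lΘ prior obs φ f x y ≤ 1 - qfun lΘ prior obs φ g s' y := by
  have hpost := integrable_post lΘ prior obs hmarg_pos y
  have hrg := integrable_rank_post hφ_meas hφ_nonneg hprior_meas hprior_nonneg
    hobs_meas hobs_nonneg hmarg_pos hg_meas s' y
  have key : ∫ θt, (1 - contRank lΘ φ g s' θt y) * post lΘ prior obs θt y ∂lΘ
      = 1 - qfun lΘ prior obs φ g s' y := by
    have : ∀ θt, (1 - contRank lΘ φ g s' θt y) * post lΘ prior obs θt y
        = post lΘ prior obs θt y - contRank lΘ φ g s' θt y * post lΘ prior obs θt y :=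
      fun θt => by ring
    rw [integral_congr_ae (Filter.Eventually.of_forall this), integral_sub hpost hrg,
      integral_post lΘ prior obs hmarg_pos y]
    rfl
  rw [← key]
  refine integral_mono (integrable_rank_post hφ_meas hφ_nonneg hprior_meas hprior_nonneg
      hobs_meas hobs_nonneg hmarg_pos hf_meas x y)
    ((hpost.sub hrg).congr (Filter.Eventually.of_forall fun θt => by
      simp only [Pi.sub_apply]; ring)) fun θt => ?_
  exact mul_le_mul_of_nonneg_right
    (contRank_rev_upper hφ_meas hφ_nonneg hφ_int hg_meas hfg hs' θt y)
    (post_nonneg lΘ prior obs hprior_nonneg hobs_nonneg hmarg_pos θt y)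

end QFacts


section ContMain

set_option linter.unusedSectionVars false

variable {lΘ : Measure Θ} {lY : Measure Y} [SigmaFinite lΘ] [SigmaFinite lY]
  {prior : Θ → ℝ} {obs : Y → Θ → ℝ} {φ f g : Θ → Y → ℝ}

lemma passesCont_rev (hprior_meas : Measurable prior) (hprior_nonneg : ∀ θ, 0 ≤ prior θ)
    (hprior_int : ∫ θ, prior θ ∂lΘ = 1)
    (hobs_meas : Measurable (Function.uncurry obs)) (hobs_nonneg : ∀ y θ, 0 ≤ obs y θ)
    (hobs_int : ∀ θ, ∫ y, obs y θ ∂lY = 1)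
    (hmarg_pos : ∀ y, 0 < marg lΘ prior obs y)
    (hφ_meas : Measurable (Function.uncurry φ)) (hφ_nonneg : ∀ θ y, 0 ≤ φ θ y)
    (hφ_int : ∀ y, ∫ θ, φ θ y ∂lΘ = 1)
    (hf_meas : Measurable (Function.uncurry f)) (hg_meas : Measurable (Function.uncurry g))
    (hfg : ∀ θ θ' y, f θ y ≤ f θ' y ↔ g θ' y ≤ g θ y) :
    PassesContSBC lΘ lY prior obs φ g → PassesContSBC lΘ lY prior obs φ f := by
  intro hg x hx
  obtain ⟨hx0, hx1⟩ := hx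
  have hmargInt := integrable_marg lΘ lY prior obs hprior_meas hprior_nonneg hprior_int
    hobs_meas hobs_nonneg hobs_int hmarg_pos
  have hmargVal := integral_marg lΘ lY prior obs hprior_meas hprior_nonneg hprior_int
    hobs_meas hobs_nonneg hobs_int hmarg_pos
  rcases eq_or_lt_of_le hx1 with hxeq | hxlt
  · subst hxeq
    rw [show (∫ y, qfun lΘ prior obs φ f 1 y * marg lΘ prior obs y ∂lY)
        = ∫ y, marg lΘ prior obs y ∂lY from
      integral_congr_ae (Filter.Eventually.of_forall fun y => by
        dsimp only
        rw [qfun_one hφ_meas hφ_nonneg hφ_int hmarg_pos hf_meas y, one_mul])]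
    exact hmargVal
  · set s : ℝ := 1 - x with hs
    have hspos : 0 < s := by simp [hs]; linarith
    have hsle : s ≤ 1 := by simp [hs]; linarith
    -- integrability of qfun g t * marg for t ∈ (0,1]
    have hqg_int : ∀ t : ℝ, 0 < t → t ≤ 1 →
        Integrable (fun y => qfun lΘ prior obs φ g t y * marg lΘ prior obs y) lY := by
      intro t ht0 ht1
      exact integrable_of_integral_ne_zero
        (by rw [hg t (Set.mem_Icc.mpr ⟨ht0.le, ht1⟩)]; exact ht0.ne')
    have hub_int : ∀ t : ℝ, 0 < t → t ≤ 1 →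
        Integrable (fun y => (1 - qfun lΘ prior obs φ g t y) * marg lΘ prior obs y) lY := by
      intro t ht0 ht1
      exact (hmargInt.sub (hqg_int t ht0 ht1)).congr
        (Filter.Eventually.of_forall fun y => by simp only [Pi.sub_apply]; ring)
    have hub_val : ∀ t : ℝ, 0 < t → t ≤ 1 →
        ∫ y, (1 - qfun lΘ prior obs φ g t y) * marg lΘ prior obs y ∂lY = 1 - t := by
      intro t ht0 ht1
      rw [show (∫ y, (1 - qfun lΘ prior obs φ g t y) * marg lΘ prior obs y ∂lY)
          = ∫ y, (marg lΘ prior obs y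
            - qfun lΘ prior obs φ g t y * marg lΘ prior obs y) ∂lY from
        integral_congr_ae (Filter.Eventually.of_forall fun y => by dsimp only; ring),
        integral_sub hmargInt (hqg_int t ht0 ht1), hmargVal,
        hg t (Set.mem_Icc.mpr ⟨ht0.le, ht1⟩)]
    -- integrability of qfun f x * marg
    have hmeas_qf : Measurable fun y => qfun lΘ prior obs φ f x y * marg lΘ prior obs y :=
      (qfun_measurable hφ_meas hprior_meas hobs_meas hf_meas x).mul
        (marg_measurable lΘ prior obs hobs_meas hprior_meas)
    have hhalf0 : (0:ℝ) < s / 2 := by linarith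
    have hhalf1 : s / 2 ≤ 1 := by linarith
    have hhalflt : s / 2 < 1 - x := by rw [← hs]; linarith
    have hqf_int : Integrable (fun y => qfun lΘ prior obs φ f x y * marg lΘ prior obs y) lY := by
      refine (hub_int (s/2) hhalf0 hhalf1).mono' hmeas_qf.aestronglyMeasurable
        (Filter.Eventually.of_forall fun y => ?_)
      rw [Real.norm_eq_abs, abs_of_nonneg (mul_nonneg
        (qfun_nonneg hprior_nonneg hobs_nonneg hmarg_pos x y) (hmarg_pos y).le)]
      exact mul_le_mul_of_nonneg_right
        (qfun_rev_upper hφ_meas hφ_nonneg hφ_int hprior_meas hprior_nonneg hobs_meas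
          hobs_nonneg hmarg_pos hf_meas hg_meas hfg hhalflt y) (hmarg_pos y).le
    -- lower bound
    have hlow : x ≤ ∫ y, qfun lΘ prior obs φ f x y * marg lΘ prior obs y ∂lY := by
      have := integral_mono (hub_int s hspos hsle) hqf_int (fun y =>
        mul_le_mul_of_nonneg_right
          (qfun_rev_lower hφ_meas hφ_nonneg hφ_int hprior_meas hprior_nonneg hobs_meas
            hobs_nonneg hmarg_pos hf_meas hg_meas hfg x y) (hmarg_pos y).le)
      rw [hub_val s hspos hsle] at this
      have hxs : 1 - s = x := by rw [hs]; ring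
      linarith
    -- upper bound
    have hup : ∫ y, qfun lΘ prior obs φ f x y * marg lΘ prior obs y ∂lY ≤ x := by
      refine le_of_forall_pos_le_add fun ε hε => ?_
      set s' : ℝ := max (s / 2) (s - ε) with hs'
      have hs'pos : 0 < s' := lt_max_of_lt_left hhalf0
      have hs'le1 : s' ≤ 1 := max_le hhalf1 (by linarith)
      have hs'lt : s' < 1 - x := by
        rw [← hs]
        exact max_lt (by linarith) (by linarith)
      have := integral_mono hqf_int (hub_int s' hs'pos hs'le1) (fun y =>
        mul_le_mul_of_nonneg_right
          (qfun_rev_upper hφ_meas hφ_nonneg hφ_int hprior_meas hprior_nonneg hobs_meas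
            hobs_nonneg hmarg_pos hf_meas hg_meas hfg hs'lt y) (hmarg_pos y).le)
      rw [hub_val s' hs'pos hs'le1] at this
      have : 1 - s' ≤ x + ε := by
        have h1 : s - ε ≤ s' := le_max_right _ _
        rw [hs] at h1
        linarith
      linarith
    linarith

end ContMain


section SampleFacts

set_option linter.unusedSectionVars false

variable {lΘ : Measure Θ} {lY : Measure Y} [SigmaFinite lΘ] [SigmaFinite lY]
  {prior : Θ → ℝ} {obs : Y → Θ → ℝ} {φ f g : Θ → Y → ℝ}

lemma postFamMeas_prob (hφ_meas : Measurable (Function.uncurry φ))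
    (hφ_nonneg : ∀ θ y, 0 ≤ φ θ y) (hφ_int : ∀ y, ∫ θ, φ θ y ∂lΘ = 1) (y : Y) :
    IsProbabilityMeasure (postFamMeas lΘ φ y) := by
  constructor
  rw [postFamMeas, withDensity_apply _ MeasurableSet.univ, setLIntegral_univ,
    ← ofReal_integral_eq_lintegral_ofReal (integrable_phi hφ_int y)
      (Filter.Eventually.of_forall fun θ => hφ_nonneg θ y), hφ_int y]
  simp

lemma Nless_cast {M : ℕ} (u : Θ → Y → ℝ) (θs : Fin M → Θ) (θt : Θ) (y : Y) :
    ((Nless u θs θt y : ℕ) : ℝ) = ∑ m : Fin M, (if u (θs m) y < u θt y then (1:ℝ) else 0) := by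
  rw [Nless, Finset.card_filter]
  push_cast
  rfl

lemma Neq_cast {M : ℕ} (u : Θ → Y → ℝ) (θs : Fin M → Θ) (θt : Θ) (y : Y) :
    ((Neq u θs θt y : ℕ) : ℝ) = ∑ m : Fin M, (if u (θs m) y = u θt y then (1:ℝ) else 0) := by
  rw [Neq, Finset.card_filter]
  push_cast
  rfl

lemma Nless_rev {M : ℕ} (hfg : ∀ θ θ' y, f θ y ≤ f θ' y ↔ g θ' y ≤ g θ y)
    (θs : Fin M → Θ) (θt : Θ) (y : Y) :
    ((Nless f θs θt y : ℕ) : ℝ)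
      = (M : ℝ) - (Nless g θs θt y : ℕ) - (Neq g θs θt y : ℕ) := by
  have hlt : ∀ θ θ' (y : Y), f θ y < f θ' y ↔ g θ' y < g θ y := by
    intro θ θ' y
    rw [lt_iff_not_ge, lt_iff_not_ge, not_iff_not]
    exact hfg θ' θ y
  rw [Nless_cast, Nless_cast, Neq_cast]
  have : ∀ m : Fin M, (if f (θs m) y < f θt y then (1:ℝ) else 0)
      = 1 - (if g (θs m) y < g θt y then (1:ℝ) else 0)
        - (if g (θs m) y = g θt y then (1:ℝ) else 0) := by
    intro m
    rcases lt_trichotomy (g (θs m) y) (g θt y) with hm | hm | hm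
    · rw [if_neg (fun hh => absurd ((hlt (θs m) θt y).mp hh) (not_lt.mpr hm.le)),
        if_pos hm, if_neg hm.ne]
      ring
    · rw [if_neg (fun hh => absurd ((hlt (θs m) θt y).mp hh) (not_lt.mpr hm.le)),
        if_neg (not_lt.mpr hm.ge), if_pos hm]
      ring
    · rw [if_pos ((hlt (θs m) θt y).mpr hm), if_neg (not_lt.mpr hm.le), if_neg hm.ne']
      ring
  rw [Finset.sum_congr rfl fun m _ => this m]
  rw [Finset.sum_sub_distrib, Finset.sum_sub_distrib, Finset.sum_const]
  simp [sub_sub]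

lemma Neq_rev {M : ℕ} (hfg : ∀ θ θ' y, f θ y ≤ f θ' y ↔ g θ' y ≤ g θ y)
    (θs : Fin M → Θ) (θt : Θ) (y : Y) :
    Neq f θs θt y = Neq g θs θt y := by
  unfold Neq
  congr 1
  refine Finset.filter_congr fun m _ => ?_
  constructor
  · intro he
    exact le_antisymm ((hfg θt (θs m) y).mp he.ge) ((hfg (θs m) θt y).mp he.le)
  · intro he
    exact le_antisymm ((hfg (θs m) θt y).mpr he.ge) ((hfg θt (θs m) y).mpr he.le)

lemma sample_integrand_rev {M i : ℕ} (hi : i < M)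
    (hfg : ∀ θ θ' y, f θ y ≤ f θ' y ↔ g θ' y ≤ g θ y)
    (θs : Fin M → Θ) (θt : Θ) (y : Y) :
    min 1 (max 0 (((i : ℝ) + 1 - (Nless f θs θt y : ℕ)) / ((Neq f θs θt y : ℕ) + 1)))
      = 1 - min 1 (max 0 ((((M - 1 - i : ℕ) : ℝ) + 1 - (Nless g θs θt y : ℕ))
          / ((Neq g θs θt y : ℕ) + 1))) := by
  have hj1 : (((M - 1 - i : ℕ) : ℝ) + 1) = (M : ℝ) - (i : ℝ) := by
    have h2 : M - 1 - i + 1 = M - i := by omega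
    rw [show (((M - 1 - i : ℕ) : ℝ) + 1) = (((M - 1 - i + 1 : ℕ)) : ℝ) by push_cast; ring,
      h2, Nat.cast_sub hi.le]
  rw [one_sub_clamp, Neq_rev hfg θs θt y, Nless_rev hfg θs θt y, hj1]
  congr 1
  congr 1
  have hden : ((Neq g θs θt y : ℕ) : ℝ) + 1 ≠ 0 := by positivity
  field_simp
  ring

lemma clamp_integrand_measurable (hu : Measurable (Function.uncurry f))
    (M i : ℕ) (y : Y) (θt : Θ) :
    Measurable fun θs : Fin M → Θ =>
      min 1 (max 0 (((i : ℝ) + 1 - (Nless f θs θt y : ℕ)) / ((Neq f θs θt y : ℕ) + 1))) := by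
  have hNl : Measurable fun θs : Fin M → Θ => ((Nless f θs θt y : ℕ) : ℝ) := by
    simp only [Nless_cast]
    exact Finset.measurable_sum _ fun m _ => Measurable.ite
      (measurableSet_lt ((meas_slice hu y).comp (measurable_pi_apply m)) measurable_const)
      measurable_const measurable_const
  have hNe : Measurable fun θs : Fin M → Θ => ((Neq f θs θt y : ℕ) : ℝ) := by
    simp only [Neq_cast]
    exact Finset.measurable_sum _ fun m _ => Measurable.ite
      (measurableSet_eq_fun ((meas_slice hu y).comp (measurable_pi_apply m)) measurable_const)
      measurable_const measurable_const
  exact measurable_const.min (measurable_const.max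
    ((measurable_const.sub hNl).div (hNe.add measurable_const)))

lemma sampleRank_integrand_integrable (hφ_meas : Measurable (Function.uncurry φ))
    (hφ_nonneg : ∀ θ y, 0 ≤ φ θ y) (hφ_int : ∀ y, ∫ θ, φ θ y ∂lΘ = 1)
    (hu : Measurable (Function.uncurry f)) (M i : ℕ) (y : Y) (θt : Θ) :
    Integrable (fun θs : Fin M → Θ =>
      min 1 (max 0 (((i : ℝ) + 1 - (Nless f θs θt y : ℕ)) / ((Neq f θs θt y : ℕ) + 1))))
      (Measure.pi fun _ : Fin M => postFamMeas lΘ φ y) := by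
  haveI : IsProbabilityMeasure (postFamMeas lΘ φ y) :=
    postFamMeas_prob hφ_meas hφ_nonneg hφ_int y
  refine (integrable_const (1:ℝ)).mono'
    ((clamp_integrand_measurable hu M i y θt).aestronglyMeasurable)
    (Filter.Eventually.of_forall fun θs => ?_)
  rw [Real.norm_eq_abs, abs_of_nonneg (clamp_nonneg _)]
  exact clamp_le_one _

lemma sampleRank_measurable (hφ_meas : Measurable (Function.uncurry φ))
    (hφ_nonneg : ∀ θ y, 0 ≤ φ θ y) (hφ_int : ∀ y, ∫ θ, φ θ y ∂lΘ = 1)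
    (hu : Measurable (Function.uncurry f)) (M i : ℕ) (y : Y) :
    Measurable fun θt => sampleRank lΘ φ f M i θt y := by
  haveI : IsProbabilityMeasure (postFamMeas lΘ φ y) :=
    postFamMeas_prob hφ_meas hφ_nonneg hφ_int y
  have hNl : Measurable fun q : Θ × (Fin M → Θ) => ((Nless f q.2 q.1 y : ℕ) : ℝ) := by
    simp only [Nless_cast]
    exact Finset.measurable_sum _ fun m _ => Measurable.ite
      (measurableSet_lt ((meas_slice hu y).comp ((measurable_pi_apply m).comp measurable_snd))
        ((meas_slice hu y).comp measurable_fst))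
      measurable_const measurable_const
  have hNe : Measurable fun q : Θ × (Fin M → Θ) => ((Neq f q.2 q.1 y : ℕ) : ℝ) := by
    simp only [Neq_cast]
    exact Finset.measurable_sum _ fun m _ => Measurable.ite
      (measurableSet_eq_fun ((meas_slice hu y).comp ((measurable_pi_apply m).comp measurable_snd))
        ((meas_slice hu y).comp measurable_fst))
      measurable_const measurable_const
  have hsm : StronglyMeasurable fun q : Θ × (Fin M → Θ) =>
      min 1 (max 0 (((i : ℝ) + 1 - (Nless f q.2 q.1 y : ℕ)) / ((Neq f q.2 q.1 y : ℕ) + 1))) :=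
    (measurable_const.min (measurable_const.max
      ((measurable_const.sub hNl).div (hNe.add measurable_const)))).stronglyMeasurable
  exact hsm.integral_prod_right'.measurable

lemma sampleRank_nonneg (θt : Θ) (y : Y) {M i : ℕ} : 0 ≤ sampleRank lΘ φ f M i θt y :=
  integral_nonneg fun θs => clamp_nonneg _

lemma sampleRank_le_one (hφ_meas : Measurable (Function.uncurry φ))
    (hφ_nonneg : ∀ θ y, 0 ≤ φ θ y) (hφ_int : ∀ y, ∫ θ, φ θ y ∂lΘ = 1)
    (hu : Measurable (Function.uncurry f)) {M i : ℕ} (θt : Θ) (y : Y) :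
    sampleRank lΘ φ f M i θt y ≤ 1 := by
  haveI : IsProbabilityMeasure (postFamMeas lΘ φ y) :=
    postFamMeas_prob hφ_meas hφ_nonneg hφ_int y
  calc sampleRank lΘ φ f M i θt y
      ≤ ∫ _θs : Fin M → Θ, (1:ℝ) ∂(Measure.pi fun _ : Fin M => postFamMeas lΘ φ y) :=
        integral_mono (sampleRank_integrand_integrable hφ_meas hφ_nonneg hφ_int hu M i y θt)
          (integrable_const 1) fun θs => clamp_le_one _
    _ = 1 := by simp

lemma sampleRank_rev (hφ_meas : Measurable (Function.uncurry φ))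
    (hφ_nonneg : ∀ θ y, 0 ≤ φ θ y) (hφ_int : ∀ y, ∫ θ, φ θ y ∂lΘ = 1)
    (hg_meas : Measurable (Function.uncurry g))
    (hfg : ∀ θ θ' y, f θ y ≤ f θ' y ↔ g θ' y ≤ g θ y)
    {M i : ℕ} (hi : i < M) (θt : Θ) (y : Y) :
    sampleRank lΘ φ f M i θt y = 1 - sampleRank lΘ φ g M (M - 1 - i) θt y := by
  haveI : IsProbabilityMeasure (postFamMeas lΘ φ y) :=
    postFamMeas_prob hφ_meas hφ_nonneg hφ_int y
  unfold sampleRank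
  rw [integral_congr_ae (Filter.Eventually.of_forall fun θs =>
    sample_integrand_rev hi hfg θs θt y),
    integral_sub (integrable_const 1)
      (sampleRank_integrand_integrable hφ_meas hφ_nonneg hφ_int hg_meas M (M - 1 - i) y θt)]
  simp

lemma Qfun_rev (hφ_meas : Measurable (Function.uncurry φ))
    (hφ_nonneg : ∀ θ y, 0 ≤ φ θ y) (hφ_int : ∀ y, ∫ θ, φ θ y ∂lΘ = 1)
    (hprior_meas : Measurable prior) (hprior_nonneg : ∀ θ, 0 ≤ prior θ)
    (hobs_meas : Measurable (Function.uncurry obs)) (hobs_nonneg : ∀ y θ, 0 ≤ obs y θ)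
    (hmarg_pos : ∀ y, 0 < marg lΘ prior obs y)
    (hf_meas : Measurable (Function.uncurry f)) (hg_meas : Measurable (Function.uncurry g))
    (hfg : ∀ θ θ' y, f θ y ≤ f θ' y ↔ g θ' y ≤ g θ y)
    {M i : ℕ} (hi : i < M) (y : Y) :
    Qfun lΘ prior obs φ f M i y = 1 - Qfun lΘ prior obs φ g M (M - 1 - i) y := by
  have hpost := integrable_post lΘ prior obs hmarg_pos y
  have hint : ∀ (u : Θ → Y → ℝ), Measurable (Function.uncurry u) → ∀ (k : ℕ),
      Integrable (fun θt => sampleRank lΘ φ u M k θt y * post lΘ prior obs θt y) lΘ := by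
    intro u hu k
    refine hpost.mono'
      (((sampleRank_measurable hφ_meas hφ_nonneg hφ_int hu M k y).mul
        ((post_measurable lΘ prior obs hobs_meas hprior_meas).comp
          (measurable_id.prodMk measurable_const))).aestronglyMeasurable)
      (Filter.Eventually.of_forall fun θt => ?_)
    rw [Real.norm_eq_abs, abs_of_nonneg (mul_nonneg (sampleRank_nonneg θt y)
      (post_nonneg lΘ prior obs hprior_nonneg hobs_nonneg hmarg_pos θt y))]
    exact mul_le_of_le_one_left
      (post_nonneg lΘ prior obs hprior_nonneg hobs_nonneg hmarg_pos θt y)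
      (sampleRank_le_one hφ_meas hφ_nonneg hφ_int hu θt y)
  unfold Qfun
  have hcongr : (∫ θt, sampleRank lΘ φ f M i θt y * post lΘ prior obs θt y ∂lΘ)
      = ∫ θt, (post lΘ prior obs θt y
          - sampleRank lΘ φ g M (M - 1 - i) θt y * post lΘ prior obs θt y) ∂lΘ :=
    integral_congr_ae (Filter.Eventually.of_forall fun θt => by
      dsimp only
      rw [sampleRank_rev hφ_meas hφ_nonneg hφ_int hg_meas hfg hi θt y]
      ring)
  rw [hcongr, integral_sub hpost (hint g hg_meas (M - 1 - i)),
    integral_post lΘ prior obs hmarg_pos y]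

lemma passesSample_rev (hprior_meas : Measurable prior) (hprior_nonneg : ∀ θ, 0 ≤ prior θ)
    (hprior_int : ∫ θ, prior θ ∂lΘ = 1)
    (hobs_meas : Measurable (Function.uncurry obs)) (hobs_nonneg : ∀ y θ, 0 ≤ obs y θ)
    (hobs_int : ∀ θ, ∫ y, obs y θ ∂lY = 1)
    (hmarg_pos : ∀ y, 0 < marg lΘ prior obs y)
    (hφ_meas : Measurable (Function.uncurry φ)) (hφ_nonneg : ∀ θ y, 0 ≤ φ θ y)
    (hφ_int : ∀ y, ∫ θ, φ θ y ∂lΘ = 1)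
    (hf_meas : Measurable (Function.uncurry f)) (hg_meas : Measurable (Function.uncurry g))
    (hfg : ∀ θ θ' y, f θ y ≤ f θ' y ↔ g θ' y ≤ g θ y) (M : ℕ) :
    PassesSampleSBC lΘ lY prior obs φ g M → PassesSampleSBC lΘ lY prior obs φ f M := by
  intro hg i hi
  have hmargInt := integrable_marg lΘ lY prior obs hprior_meas hprior_nonneg hprior_int
    hobs_meas hobs_nonneg hobs_int hmarg_pos
  have hmargVal := integral_marg lΘ lY prior obs hprior_meas hprior_nonneg hprior_int
    hobs_meas hobs_nonneg hobs_int hmarg_pos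
  have hj : M - 1 - i < M := by omega
  have hgj := hg (M - 1 - i) hj
  have hQg_int : Integrable
      (fun y => Qfun lΘ prior obs φ g M (M - 1 - i) y * marg lΘ prior obs y) lY := by
    refine integrable_of_integral_ne_zero (by rw [hgj]; positivity)
  have hcongr : (∫ y, Qfun lΘ prior obs φ f M i y * marg lΘ prior obs y ∂lY)
      = ∫ y, (marg lΘ prior obs y
          - Qfun lΘ prior obs φ g M (M - 1 - i) y * marg lΘ prior obs y) ∂lY :=
    integral_congr_ae (Filter.Eventually.of_forall fun y => by
      dsimp only
      rw [Qfun_rev hφ_meas hφ_nonneg hφ_int hprior_meas hprior_nonneg hobs_meas hobs_nonneg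
        hmarg_pos hf_meas hg_meas hfg hi y]
      ring)
  rw [hcongr, integral_sub hmargInt hQg_int, hmargVal, hgj]
  have hj1 : (((M - 1 - i : ℕ) : ℝ) + 1) = (M : ℝ) - (i : ℝ) := by
    have h2 : M - 1 - i + 1 = M - i := by omega
    rw [show (((M - 1 - i : ℕ) : ℝ) + 1) = (((M - 1 - i + 1 : ℕ)) : ℝ) by push_cast; ring,
      h2, Nat.cast_sub hi.le]
  rw [hj1]
  have hM1 : (M : ℝ) + 1 ≠ 0 := by positivity
  field_simp
  ring

end SampleFacts


section Congr

set_option linter.unusedSectionVars false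

variable {lΘ : Measure Θ} {lY : Measure Y} [SigmaFinite lΘ] [SigmaFinite lY]
  {prior : Θ → ℝ} {obs : Y → Θ → ℝ} {φ f g : Θ → Y → ℝ}

lemma passesCont_congr (hsame : ∀ θ θ' y, f θ y ≤ f θ' y ↔ g θ y ≤ g θ' y) :
    PassesContSBC lΘ lY prior obs φ f ↔ PassesContSBC lΘ lY prior obs φ g := by
  have hq : ∀ (x : ℝ) (y : Y), qfun lΘ prior obs φ f x y = qfun lΘ prior obs φ g x y := by
    intro x y
    have hC : ∀ θt, Cdf lΘ φ f (f θt y) y = Cdf lΘ φ g (g θt y) y := by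
      intro θt
      unfold Cdf
      exact integral_congr_ae (Filter.Eventually.of_forall fun θ => by
        dsimp only; rw [if_congr (hsame θ θt y) rfl rfl])
    have hD : ∀ θt, Dtie lΘ φ f (f θt y) y = Dtie lΘ φ g (g θt y) y := by
      intro θt
      unfold Dtie
      refine integral_congr_ae (Filter.Eventually.of_forall fun θ => ?_)
      dsimp only
      have hiff : (f θ y = f θt y) ↔ (g θ y = g θt y) := by
        constructor
        · intro he
          exact le_antisymm ((hsame θ θt y).mp he.le) ((hsame θt θ y).mp he.ge)
        · intro he
          exact le_antisymm ((hsame θ θt y).mpr he.le) ((hsame θt θ y).mpr he.ge)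
      rw [if_congr hiff rfl rfl]
    unfold qfun
    refine integral_congr_ae (Filter.Eventually.of_forall fun θt => ?_)
    dsimp only
    unfold contRank
    rw [hC θt, hD θt]
  have hint : ∀ x : ℝ, (∫ y, qfun lΘ prior obs φ f x y * marg lΘ prior obs y ∂lY)
      = ∫ y, qfun lΘ prior obs φ g x y * marg lΘ prior obs y ∂lY := fun x =>
    integral_congr_ae (Filter.Eventually.of_forall fun y => by dsimp only; rw [hq x y])
  constructor
  · intro H x hx; rw [← hint x]; exact H x hx
  · intro H x hx; rw [hint x]; exact H x hx

lemma passesSample_congr (hsame : ∀ θ θ' y, f θ y ≤ f θ' y ↔ g θ y ≤ g θ' y) (M : ℕ) :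
    PassesSampleSBC lΘ lY prior obs φ f M ↔ PassesSampleSBC lΘ lY prior obs φ g M := by
  have hlt : ∀ θ θ' (y : Y), f θ y < f θ' y ↔ g θ y < g θ' y := by
    intro θ θ' y
    rw [lt_iff_not_ge, lt_iff_not_ge, not_iff_not]
    exact hsame θ' θ y
  have heq : ∀ θ θ' (y : Y), f θ y = f θ' y ↔ g θ y = g θ' y := by
    intro θ θ' y
    constructor
    · intro he
      exact le_antisymm ((hsame θ θ' y).mp he.le) ((hsame θ' θ y).mp he.ge)
    · intro he
      exact le_antisymm ((hsame θ θ' y).mpr he.le) ((hsame θ' θ y).mpr he.ge)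
  have hNl : ∀ (θs : Fin M → Θ) θt (y : Y), Nless f θs θt y = Nless g θs θt y := by
    intro θs θt y
    unfold Nless
    congr 1
    exact Finset.filter_congr fun m _ => hlt (θs m) θt y
  have hNe : ∀ (θs : Fin M → Θ) θt (y : Y), Neq f θs θt y = Neq g θs θt y := by
    intro θs θt y
    unfold Neq
    congr 1
    exact Finset.filter_congr fun m _ => heq (θs m) θt y
  have hQ : ∀ (i : ℕ) (y : Y), Qfun lΘ prior obs φ f M i y = Qfun lΘ prior obs φ g M i y := by
    intro i y
    unfold Qfun
    refine integral_congr_ae (Filter.Eventually.of_forall fun θt => ?_)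
    dsimp only
    congr 1
    unfold sampleRank
    exact integral_congr_ae (Filter.Eventually.of_forall fun θs => by
      dsimp only; rw [hNl θs θt y, hNe θs θt y])
  have hint : ∀ i : ℕ, (∫ y, Qfun lΘ prior obs φ f M i y * marg lΘ prior obs y ∂lY)
      = ∫ y, Qfun lΘ prior obs φ g M i y * marg lΘ prior obs y ∂lY := fun i =>
    integral_congr_ae (Filter.Eventually.of_forall fun y => by dsimp only; rw [hQ i y])
  constructor
  · intro H i hi; rw [← hint i]; exact H i hi
  · intro H i hi; rw [hint i]; exact H i hi

end Congr

theorem monotonic_transformations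
    (lΘ : Measure Θ) (lY : Measure Y) [SigmaFinite lΘ] [SigmaFinite lY]
    (prior : Θ → ℝ) (obs : Y → Θ → ℝ) (φ f : Θ → Y → ℝ)
    (hprior_meas : Measurable prior) (hprior_nonneg : ∀ θ, 0 ≤ prior θ)
    (hprior_int : ∫ θ, prior θ ∂lΘ = 1)
    (hobs_meas : Measurable (Function.uncurry obs))
    (hobs_nonneg : ∀ (y : Y) (θ : Θ), 0 ≤ obs y θ)
    (hobs_int : ∀ θ, ∫ y, obs y θ ∂lY = 1)
    (hmarg_pos : ∀ y, 0 < marg lΘ prior obs y)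
    (hφ_meas : Measurable (Function.uncurry φ))
    (hφ_nonneg : ∀ (θ : Θ) (y : Y), 0 ≤ φ θ y)
    (hφ_int : ∀ y, ∫ θ, φ θ y ∂lΘ = 1)
    (hf_meas : Measurable (Function.uncurry f))
    (g : Θ → Y → ℝ) (hg_meas : Measurable (Function.uncurry g))
    (h : Y → ℝ → ℝ) (hcomp : ∀ (θ : Θ) (y : Y), f θ y = h y (g θ y))
    (hmono : (∀ y : Y, StrictMono (h y)) ∨ (∀ y : Y, StrictAnti (h y))) :
    (PassesContSBC lΘ lY prior obs φ f ↔ PassesContSBC lΘ lY prior obs φ g)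
    ∧ (∀ M : ℕ, PassesSampleSBC lΘ lY prior obs φ f M
        ↔ PassesSampleSBC lΘ lY prior obs φ g M) := by
  rcases hmono with hinc | hdec
  · have hsame : ∀ θ θ' (y : Y), f θ y ≤ f θ' y ↔ g θ y ≤ g θ' y := by
      intro θ θ' y
      rw [hcomp θ y, hcomp θ' y]
      exact (hinc y).le_iff_le
    exact ⟨passesCont_congr hsame, fun M => passesSample_congr hsame M⟩
  · have hfg : ∀ θ θ' (y : Y), f θ y ≤ f θ' y ↔ g θ' y ≤ g θ y := by
      intro θ θ' y
      rw [hcomp θ y, hcomp θ' y]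
      exact (hdec y).le_iff_ge
    have hgf : ∀ θ θ' (y : Y), g θ y ≤ g θ' y ↔ f θ' y ≤ f θ y :=
      fun θ θ' y => (hfg θ' θ y).symm
    constructor
    · constructor
      · exact passesCont_rev hprior_meas hprior_nonneg hprior_int hobs_meas hobs_nonneg
          hobs_int hmarg_pos hφ_meas hφ_nonneg hφ_int hg_meas hf_meas hgf
      · exact passesCont_rev hprior_meas hprior_nonneg hprior_int hobs_meas hobs_nonneg
          hobs_int hmarg_pos hφ_meas hφ_nonneg hφ_int hf_meas hg_meas hfg
    · intro M
      constructor
      · exact passesSample_rev hprior_meas hprior_nonneg hprior_int hobs_meas hobs_nonneg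
          hobs_int hmarg_pos hφ_meas hφ_nonneg hφ_int hg_meas hf_meas hgf M
      · exact passesSample_rev hprior_meas hprior_nonneg hprior_int hobs_meas hobs_nonneg
          hobs_int hmarg_pos hφ_meas hφ_nonneg hφ_int hf_meas hg_meas hfg M

end SBC
end
end

section
/- (Theorem 7, incomplete use of data.) Let π be a Bayesian model on Θ × Y, let Y' be a measurable space with σ-finite reference measure λ_{Y'}, and let t : Y → Y' be measurable. Let π' be the Bayesian model on Θ × Y' with the same prior π'_prior = π_prior and with observation density π'_obs : Y' × Θ → [0,∞) that is a λ_{Y'}-density of the pushforward under t of the measure π_obs(·|θ)·λ_Y, i.e. ∫_{Y'} h(y') π'_obs(y'|θ) dλ_{Y'}(y') = ∫_Y h(t(y)) π_obs(y|θ) dλ_Y(y) for every bounded measurable h : Y' → ℝ and every θ ∈ Θ. Let f' : Θ × Y' → ℝ be a test quantity and φ' a posterior family on Θ × Y' such that neither π' nor φ' has ties with respect to f', and suppose φ' passes continuous SBC with respect to f' in the model π'. Define f(θ,y) := f'(θ, t(y)) and φ(θ|y) := φ'(θ | t(y)). Then φ passes continuous SBC with respect to f in the model π. -/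
open MeasureTheory Filter Topology

noncomputable section

namespace SBC

variable {Θ Y : Type*} [MeasurableSpace Θ] [MeasurableSpace Y]

/-! The continuous rank CDF `r` of `φ = φ' ∘ t` with respect to `f = f' ∘ t` at `(θ̃, y)` is,
by definition, that of `φ'` with respect to `f'` at `(θ̃, t y)`. Integrating over the joint law
`π_obs(y|θ̃) π_prior(θ̃)` and exchanging the order of integration (Fubini), the SBC integral of
`φ` becomes the prior average of `θ̃ ↦ ∫ r(θ̃, t y) π_obs(y|θ̃) dy`, which by the pushforward
property of `π'_obs` is `∫ r(θ̃, y') π'_obs(y'|θ̃) dy'`; running the same computation backwards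
in the model `π'` gives the SBC integral of `φ'`. -/

section ContRank

variable {lΘ : Measure Θ} {φ f : Θ → Y → ℝ}

omit [MeasurableSpace Y] in
theorem abs_contRank_le_one (x : ℝ) (θt : Θ) (y : Y) : |contRank lΘ φ f x θt y| ≤ 1 := by
  unfold contRank
  split_ifs
  · simp
  · simp
  · rw [abs_of_nonneg (le_min zero_le_one (le_max_left _ _))]
    exact min_le_left _ _

variable [SFinite lΘ]

theorem measurable_Cdf_self (hf : Measurable (Function.uncurry f))
    (hφ : Measurable (Function.uncurry φ)) :
    Measurable fun p : Θ × Y => Cdf lΘ φ f (f p.1 p.2) p.2 := by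
  have hsample : Measurable fun q : (Θ × Y) × Θ => (q.2, q.1.2) :=
    measurable_snd.prodMk measurable_fst.snd
  refine StronglyMeasurable.measurable (StronglyMeasurable.integral_prod_right'
    (f := fun q : (Θ × Y) × Θ => if f q.2 q.1.2 ≤ f q.1.1 q.1.2 then φ q.2 q.1.2 else 0) ?_)
  exact (Measurable.ite (measurableSet_le (hf.comp hsample) (hf.comp measurable_fst))
    (hφ.comp hsample) measurable_const).stronglyMeasurable

theorem measurable_Dtie_self (hf : Measurable (Function.uncurry f))
    (hφ : Measurable (Function.uncurry φ)) :
    Measurable fun p : Θ × Y => Dtie lΘ φ f (f p.1 p.2) p.2 := by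
  have hsample : Measurable fun q : (Θ × Y) × Θ => (q.2, q.1.2) :=
    measurable_snd.prodMk measurable_fst.snd
  refine StronglyMeasurable.measurable (StronglyMeasurable.integral_prod_right'
    (f := fun q : (Θ × Y) × Θ => if f q.2 q.1.2 = f q.1.1 q.1.2 then φ q.2 q.1.2 else 0) ?_)
  exact (Measurable.ite (measurableSet_eq_fun (hf.comp hsample) (hf.comp measurable_fst))
    (hφ.comp hsample) measurable_const).stronglyMeasurable

theorem measurable_contRank (hf : Measurable (Function.uncurry f))
    (hφ : Measurable (Function.uncurry φ)) (x : ℝ) :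
    Measurable (Function.uncurry (contRank lΘ φ f x)) := by
  have hC := measurable_Cdf_self (lΘ := lΘ) hf hφ
  have hD := measurable_Dtie_self (lΘ := lΘ) hf hφ
  unfold Function.uncurry contRank
  refine Measurable.ite (measurableSet_eq_fun hD measurable_const) ?_ ?_
  · exact Measurable.ite (measurableSet_le hC measurable_const) measurable_const measurable_const
  · exact measurable_const.min (measurable_const.max
      (((measurable_const.sub hC).add hD).div hD))

end ContRank

section JointLaw

variable {lΘ : Measure Θ} {lY : Measure Y} [SFinite lY] {prior : Θ → ℝ} {obs : Y → Θ → ℝ}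

theorem integrable_obs_mul_prior (hprior_meas : Measurable prior)
    (hprior_int : ∫ θ, prior θ ∂lΘ = 1) (hobs_meas : Measurable (Function.uncurry obs))
    (hobs_nonneg : ∀ y θ, 0 ≤ obs y θ) (hobs_int : ∀ θ, ∫ y, obs y θ ∂lY = 1) :
    Integrable (fun p : Θ × Y => obs p.2 p.1 * prior p.1) (lΘ.prod lY) := by
  have hmeas : Measurable fun p : Θ × Y => obs p.2 p.1 * prior p.1 :=
    (hobs_meas.comp measurable_swap).mul (hprior_meas.comp measurable_fst)
  rw [integrable_prod_iff hmeas.aestronglyMeasurable]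
  constructor
  · refine ae_of_all _ fun θ => ?_
    exact (Integrable.of_integral_ne_zero (f := fun y => obs y θ) (by simp [hobs_int θ])).mul_const
      (prior θ)
  · have hnorm : ∀ θ, ∫ y, ‖obs y θ * prior θ‖ ∂lY = ‖prior θ‖ := fun θ => by
      simp only [norm_mul, Real.norm_of_nonneg (hobs_nonneg _ θ)]
      rw [integral_mul_const, hobs_int, one_mul]
    simp only [hnorm]
    exact (Integrable.of_integral_ne_zero (by simp [hprior_int])).norm

variable [SFinite lΘ]

theorem integral_posterior_mul_marg (hprior_meas : Measurable prior)
    (hprior_int : ∫ θ, prior θ ∂lΘ = 1) (hobs_meas : Measurable (Function.uncurry obs))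
    (hobs_nonneg : ∀ y θ, 0 ≤ obs y θ) (hobs_int : ∀ θ, ∫ y, obs y θ ∂lY = 1)
    (hmarg_pos : ∀ y, 0 < marg lΘ prior obs y)
    {g : Θ → Y → ℝ} (hg : Measurable (Function.uncurry g)) {C : ℝ} (hgC : ∀ θ y, |g θ y| ≤ C) :
    ∫ y, (∫ θ, g θ y * post lΘ prior obs θ y ∂lΘ) * marg lΘ prior obs y ∂lY
      = ∫ θ, (∫ y, g θ y * obs y θ ∂lY) * prior θ ∂lΘ := by
  have hint : Integrable (Function.uncurry fun θ y => g θ y * (obs y θ * prior θ))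
      (lΘ.prod lY) :=
    (integrable_obs_mul_prior hprior_meas hprior_int hobs_meas hobs_nonneg hobs_int).bdd_mul
      hg.aestronglyMeasurable (ae_of_all _ fun p => hgC p.1 p.2)
  calc ∫ y, (∫ θ, g θ y * post lΘ prior obs θ y ∂lΘ) * marg lΘ prior obs y ∂lY
      = ∫ y, ∫ θ, g θ y * (obs y θ * prior θ) ∂lΘ ∂lY := by
        congr 1 with y
        rw [← integral_mul_const]
        simp only [post, mul_assoc, div_mul_cancel₀ _ (hmarg_pos y).ne']
    _ = ∫ θ, ∫ y, g θ y * (obs y θ * prior θ) ∂lY ∂lΘ := (integral_integral_swap hint).symm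
    _ = ∫ θ, (∫ y, g θ y * obs y θ ∂lY) * prior θ ∂lΘ := by
        simp only [← mul_assoc, integral_mul_const]

end JointLaw

theorem incomplete_use_of_data_general
    {Y' : Type*} [MeasurableSpace Y']
    (lΘ : Measure Θ) (lY : Measure Y) (lY' : Measure Y')
    [SigmaFinite lΘ] [SigmaFinite lY] [SigmaFinite lY']
    (prior : Θ → ℝ) (obs : Y → Θ → ℝ) (obs' : Y' → Θ → ℝ)
    (hprior_meas : Measurable prior)
    (hprior_int : ∫ θ, prior θ ∂lΘ = 1)
    (hobs_meas : Measurable (Function.uncurry obs))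
    (hobs_nonneg : ∀ (y : Y) (θ : Θ), 0 ≤ obs y θ)
    (hobs_int : ∀ θ, ∫ y, obs y θ ∂lY = 1)
    (hmarg_pos : ∀ y, 0 < marg lΘ prior obs y)
    (hobs'_meas : Measurable (Function.uncurry obs'))
    (hobs'_nonneg : ∀ (y' : Y') (θ : Θ), 0 ≤ obs' y' θ)
    (hobs'_int : ∀ θ, ∫ y', obs' y' θ ∂lY' = 1)
    (hmarg'_pos : ∀ y', 0 < marg lΘ prior obs' y')
    (t : Y → Y') (ht_meas : Measurable t)
    (hpush : ∀ h : Y' → ℝ, Measurable h → (∃ C : ℝ, ∀ y', |h y'| ≤ C) →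
      ∀ θ : Θ, ∫ y', h y' * obs' y' θ ∂lY' = ∫ y, h (t y) * obs y θ ∂lY)
    (f' : Θ → Y' → ℝ) (hf'_meas : Measurable (Function.uncurry f'))
    (φ' : Θ → Y' → ℝ) (hφ'_meas : Measurable (Function.uncurry φ'))
    (hpass' : PassesContSBC lΘ lY' prior obs' φ' f') :
    PassesContSBC lΘ lY prior obs
      (fun θ y => φ' θ (t y)) (fun θ y => f' θ (t y)) := by
  intro x hx
  have hrank := measurable_contRank (lΘ := lΘ) hf'_meas hφ'_meas x
  have hbound := abs_contRank_le_one (lΘ := lΘ) (φ := φ') (f := f') x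
  calc ∫ y, qfun lΘ prior obs (fun θ y => φ' θ (t y)) (fun θ y => f' θ (t y)) x y
          * marg lΘ prior obs y ∂lY
      = ∫ θ, (∫ y, contRank lΘ φ' f' x θ (t y) * obs y θ ∂lY) * prior θ ∂lΘ :=
        integral_posterior_mul_marg hprior_meas hprior_int hobs_meas hobs_nonneg hobs_int
          hmarg_pos (hrank.comp (measurable_fst.prodMk (ht_meas.comp measurable_snd)))
          fun θ y => hbound θ (t y)
    _ = ∫ θ, (∫ y', contRank lΘ φ' f' x θ y' * obs' y' θ ∂lY') * prior θ ∂lΘ := by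
        congr 1 with θ
        exact congrArg (· * prior θ)
          (hpush _ (hrank.comp measurable_prodMk_left) ⟨1, hbound θ⟩ θ).symm
    _ = ∫ y', qfun lΘ prior obs' φ' f' x y' * marg lΘ prior obs' y' ∂lY' :=
        (integral_posterior_mul_marg hprior_meas hprior_int hobs'_meas hobs'_nonneg hobs'_int
          hmarg'_pos hrank hbound).symm
    _ = x := hpass' x hx

theorem incomplete_use_of_data
    {Y' : Type*} [MeasurableSpace Y']
    (lΘ : Measure Θ) (lY : Measure Y) (lY' : Measure Y')
    [SigmaFinite lΘ] [SigmaFinite lY] [SigmaFinite lY']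
    (prior : Θ → ℝ) (obs : Y → Θ → ℝ) (obs' : Y' → Θ → ℝ)
    (hprior_meas : Measurable prior) (hprior_nonneg : ∀ θ, 0 ≤ prior θ)
    (hprior_int : ∫ θ, prior θ ∂lΘ = 1)
    (hobs_meas : Measurable (Function.uncurry obs))
    (hobs_nonneg : ∀ (y : Y) (θ : Θ), 0 ≤ obs y θ)
    (hobs_int : ∀ θ, ∫ y, obs y θ ∂lY = 1)
    (hmarg_pos : ∀ y, 0 < marg lΘ prior obs y)
    (hobs'_meas : Measurable (Function.uncurry obs'))
    (hobs'_nonneg : ∀ (y' : Y') (θ : Θ), 0 ≤ obs' y' θ)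
    (hobs'_int : ∀ θ, ∫ y', obs' y' θ ∂lY' = 1)
    (hmarg'_pos : ∀ y', 0 < marg lΘ prior obs' y')
    (t : Y → Y') (ht_meas : Measurable t)
    (hpush : ∀ h : Y' → ℝ, Measurable h → (∃ C : ℝ, ∀ y', |h y'| ≤ C) →
      ∀ θ : Θ, ∫ y', h y' * obs' y' θ ∂lY' = ∫ y, h (t y) * obs y θ ∂lY)
    (f' : Θ → Y' → ℝ) (hf'_meas : Measurable (Function.uncurry f'))
    (φ' : Θ → Y' → ℝ) (hφ'_meas : Measurable (Function.uncurry φ'))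
    (hφ'_nonneg : ∀ (θ : Θ) (y' : Y'), 0 ≤ φ' θ y')
    (hφ'_int : ∀ y', ∫ θ, φ' θ y' ∂lΘ = 1)
    (hnoties_model' : NoTies lΘ (post lΘ prior obs') f')
    (hnoties_fit' : NoTies lΘ φ' f')
    (hpass' : PassesContSBC lΘ lY' prior obs' φ' f') :
    PassesContSBC lΘ lY prior obs
      (fun θ y => φ' θ (t y)) (fun θ y => f' θ (t y)) :=
  incomplete_use_of_data_general lΘ lY lY' prior obs obs' hprior_meas hprior_int hobs_meas
    hobs_nonneg hobs_int hmarg_pos hobs'_meas hobs'_nonneg hobs'_int hmarg'_pos t ht_meas hpush f'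
    hf'_meas φ' hφ'_meas hpass'

end SBC
end
end

section
/- (Example 2: a convex combination of prior and posterior fails SBC.) In the uniform–Bernoulli model, define the posterior family φ_C(θ|y) := (1/2)(π_post(θ|y) + 1), i.e. φ_C(θ|0) = 3/2 − θ and φ_C(θ|1) = 1/2 + θ. Then φ_C does not pass continuous SBC with respect to the projection f₁(θ,y) := θ. Concretely, the quantile functions are Φ⁻¹_C(x|0) = 3/2 − (1/2)√(9−8x) and Φ⁻¹_C(x|1) = −1/2 + (1/2)√(1+8x), and there exists x ∈ [0,1] such that, with s₀ := 3/2 − (1/2)√(9−8x) and s₁ := −1/2 + (1/2)√(1+8x), one has (2s₀ − s₀²) + s₁² ≠ 2x. -/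
open MeasureTheory Filter Topology

noncomputable section

namespace SBC

variable {Θ Y : Type*} [MeasurableSpace Θ] [MeasurableSpace Y]

/-- Real-valued quantile function `C⁻¹_{φ,f}(x|y) = inf {s ∈ ℝ : x ≤ C_{φ,f}(s|y)}`. -/
def quantileR (lΘ : Measure Θ) (φ f : Θ → Y → ℝ) (x : ℝ) (y : Y) : ℝ :=
  sInf {s : ℝ | x ≤ Cdf lΘ φ f s y}

/-- Reference measure on the parameter space of the uniform–Bernoulli model:
Lebesgue measure restricted to `[0,1]`. -/
def ubMeas : Measure ℝ := MeasureTheory.volume.restrict (Set.Icc (0 : ℝ) 1)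

/-- Prior density of the uniform–Bernoulli model: uniform on `[0,1]`. -/
def ubPrior : ℝ → ℝ := fun _ => 1

/-- Observation density of the uniform–Bernoulli model:
`π_obs(y|θ) = θ^y (1-θ)^(1-y)` for `y ∈ {0,1}` (encoded as `Bool`). -/
def ubObs : Bool → ℝ → ℝ := fun y θ => if y then θ else 1 - θ

/-- The projection test quantity `f₁(θ, y) = θ`. -/
def f1 : ℝ → Bool → ℝ := fun θ _ => θ

/-- The convex combination of prior and posterior:
`φ_C(θ|y) = (1/2)(π_post(θ|y) + 1)`, i.e. `φ_C(θ|0) = 3/2 − θ`, `φ_C(θ|1) = 1/2 + θ`. -/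
def phiC : ℝ → Bool → ℝ := fun θ y => if y then 1 / 2 + θ else 3 / 2 - θ

/-! ### Auxiliary lemmas -/

lemma integ_lin (c d a b : ℝ) (hab : a ≤ b) :
    ∫ θ in Set.Icc a b, (c + d * θ) = c * (b - a) + d * ((b ^ 2 - a ^ 2) / 2) := by
  rw [MeasureTheory.integral_Icc_eq_integral_Ioc, ← intervalIntegral.integral_of_le hab]
  rw [intervalIntegral.integral_add intervalIntegrable_const
      (IntervalIntegrable.const_mul intervalIntegral.intervalIntegrable_id d)]
  rw [intervalIntegral.integral_const, intervalIntegral.integral_const_mul, integral_id]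
  simp; ring

lemma ubMeas_singleton (s : ℝ) : ubMeas {s} = 0 := by
  rw [ubMeas, Measure.restrict_apply (measurableSet_singleton s)]
  exact measure_mono_null Set.inter_subset_left (measure_singleton s)

lemma ae_mem_Icc : ∀ᵐ θ ∂ubMeas, θ ∈ Set.Icc (0 : ℝ) 1 := by
  rw [ubMeas]; exact ae_restrict_mem measurableSet_Icc

lemma dtie_zero (s : ℝ) (y : Bool) : Dtie ubMeas phiC f1 s y = 0 := by
  have hae : ∀ᵐ θ ∂ubMeas, θ ≠ s := by
    rw [ae_iff]
    have : {θ : ℝ | ¬ θ ≠ s} = {s} := by ext θ; simp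
    rw [this]; exact ubMeas_singleton s
  rw [Dtie, integral_congr_ae (g := fun _ => (0 : ℝ)) ?_, integral_zero]
  filter_upwards [hae] with θ hθ
  simp [f1, hθ]

lemma phiC_nonneg {θ : ℝ} (hθ : θ ∈ Set.Icc (0 : ℝ) 1) (y : Bool) : 0 ≤ phiC θ y := by
  obtain ⟨h0, h1⟩ := hθ
  cases y <;> simp [phiC] <;> linarith

lemma cdf_nonneg (s : ℝ) (y : Bool) : 0 ≤ Cdf ubMeas phiC f1 s y := by
  rw [Cdf]
  apply integral_nonneg_of_ae
  filter_upwards [ae_mem_Icc] with θ hθ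
  simp only [Pi.zero_apply]
  by_cases h : f1 θ y ≤ s
  · rw [if_pos h]; exact phiC_nonneg hθ y
  · rw [if_neg h]

lemma cdf_eq_setIntegral {s : ℝ} (h0 : 0 ≤ s) (h1 : s ≤ 1) (y : Bool) :
    Cdf ubMeas phiC f1 s y = ∫ θ in Set.Icc (0 : ℝ) s, phiC θ y := by
  rw [Cdf, ubMeas]
  have hind : (fun θ : ℝ => if f1 θ y ≤ s then phiC θ y else 0)
      = (Set.Iic s).indicator (fun θ => phiC θ y) := by
    funext θ; by_cases h : θ ≤ s <;> simp [Set.indicator_apply, f1, h]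
  rw [hind, MeasureTheory.integral_indicator measurableSet_Iic,
    Measure.restrict_restrict measurableSet_Iic,
    show Set.Iic s ∩ Set.Icc (0:ℝ) 1 = Set.Icc 0 s by
      ext θ
      simp only [Set.mem_inter_iff, Set.mem_Iic, Set.mem_Icc]
      constructor
      · rintro ⟨h, h0', _⟩; exact ⟨h0', h⟩
      · rintro ⟨h0', h⟩; exact ⟨h, h0', h.trans h1⟩]

lemma cdf_false {s : ℝ} (h0 : 0 ≤ s) (h1 : s ≤ 1) :
    Cdf ubMeas phiC f1 s false = (3 * s - s ^ 2) / 2 := by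
  rw [cdf_eq_setIntegral h0 h1]
  have : (fun θ : ℝ => phiC θ false) = fun θ : ℝ => 3 / 2 + (-1) * θ := by
    funext θ; simp [phiC]; ring
  rw [this, integ_lin _ _ _ _ h0]
  ring

lemma cdf_true {s : ℝ} (h0 : 0 ≤ s) (h1 : s ≤ 1) :
    Cdf ubMeas phiC f1 s true = (s + s ^ 2) / 2 := by
  rw [cdf_eq_setIntegral h0 h1]
  have : (fun θ : ℝ => phiC θ true) = fun θ : ℝ => 1 / 2 + 1 * θ := by
    funext θ; simp [phiC]
  rw [this, integ_lin _ _ _ _ h0]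
  ring

lemma cdf_neg {s : ℝ} (hs : s < 0) (y : Bool) : Cdf ubMeas phiC f1 s y = 0 := by
  rw [Cdf, integral_congr_ae (g := fun _ => (0 : ℝ)) ?_, integral_zero]
  filter_upwards [ae_mem_Icc] with θ hθ
  have : ¬ f1 θ y ≤ s := by simp only [f1]; linarith [hθ.1]
  simp [this]

lemma marg_false : marg ubMeas ubPrior ubObs false = 1 / 2 := by
  rw [marg, ubMeas]
  have : (fun θ : ℝ => ubObs false θ * ubPrior θ) = fun θ : ℝ => 1 + (-1) * θ := by
    funext θ; simp [ubObs, ubPrior]; ring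
  rw [this, integ_lin _ _ _ _ (by norm_num : (0:ℝ) ≤ 1)]
  norm_num

lemma marg_true : marg ubMeas ubPrior ubObs true = 1 / 2 := by
  rw [marg, ubMeas]
  have : (fun θ : ℝ => ubObs true θ * ubPrior θ) = fun θ : ℝ => 0 + 1 * θ := by
    funext θ; simp [ubObs, ubPrior]
  rw [this, integ_lin _ _ _ _ (by norm_num : (0:ℝ) ≤ 1)]
  norm_num

lemma post_false (θ : ℝ) : post ubMeas ubPrior ubObs θ false = 2 * (1 - θ) := by
  rw [post, marg_false]; simp [ubObs, ubPrior]; ring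

lemma post_true (θ : ℝ) : post ubMeas ubPrior ubObs θ true = 2 * θ := by
  rw [post, marg_true]; simp [ubObs, ubPrior]; ring

/-- The key quantile computation for `y = false`. -/
lemma quantile_false {x : ℝ} (hx0 : 0 ≤ x) (hx1 : x ≤ 1) :
    quantileR ubMeas phiC f1 x false = 3 / 2 - Real.sqrt (9 - 8 * x) / 2 := by
  set r := Real.sqrt (9 - 8 * x) with hr
  have hr2 : r ^ 2 = 9 - 8 * x := Real.sq_sqrt (by linarith)
  have hrnn : 0 ≤ r := Real.sqrt_nonneg _
  have hr1 : 1 ≤ r := by nlinarith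
  have hr3 : r ≤ 3 := by nlinarith
  rcases eq_or_lt_of_le hx0 with h0 | h0
  · -- x = 0 : the sublevel set is all of ℝ
    have hset : {s : ℝ | x ≤ Cdf ubMeas phiC f1 s false} = Set.univ := by
      ext s; simpa [← h0] using cdf_nonneg s false
    have hr9 : r = 3 := by nlinarith
    rw [quantileR, hset, hr9]
    rw [Real.sInf_of_not_bddBelow ?_]
    · norm_num
    · intro ⟨l, hl⟩
      have := hl (Set.mem_univ (l - 1))
      linarith
  · set s0 : ℝ := 3 / 2 - r / 2 with hs0
    clear_value s0
    have hs00 : 0 ≤ s0 := by rw [hs0]; linarith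
    have hs01 : s0 ≤ 1 := by rw [hs0]; linarith
    have hq : (3 * s0 - s0 ^ 2) / 2 = x := by
      rw [hs0]; linear_combination (-1/8 : ℝ) * hr2
    have hval : Cdf ubMeas phiC f1 s0 false = x := by
      rw [cdf_false hs00 hs01]; exact hq
    have hmem : x ≤ Cdf ubMeas phiC f1 s0 false := hval.ge
    have hlb : ∀ t ∈ {s : ℝ | x ≤ Cdf ubMeas phiC f1 s false}, s0 ≤ t := by
      intro t ht
      simp only [Set.mem_setOf_eq] at ht
      by_contra hlt
      push_neg at hlt
      rcases lt_or_ge t 0 with h | h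
      · rw [cdf_neg h] at ht; linarith
      · have ht1 : t ≤ 1 := hlt.le.trans hs01
        rw [cdf_false h ht1] at ht
        nlinarith [hq, ht, mul_pos (by linarith : (0:ℝ) < s0 - t)
          (by linarith : (0:ℝ) < 3 - s0 - t)]
    rw [quantileR]
    exact le_antisymm (csInf_le ⟨s0, hlb⟩ hmem) (le_csInf ⟨s0, hmem⟩ hlb)

/-- The key quantile computation for `y = true`. -/
lemma quantile_true {x : ℝ} (hx0 : 0 ≤ x) (hx1 : x ≤ 1) :
    quantileR ubMeas phiC f1 x true = -(1 / 2) + Real.sqrt (1 + 8 * x) / 2 := by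
  set r := Real.sqrt (1 + 8 * x) with hr
  have hr2 : r ^ 2 = 1 + 8 * x := Real.sq_sqrt (by linarith)
  have hrnn : 0 ≤ r := Real.sqrt_nonneg _
  have hr1 : 1 ≤ r := by nlinarith
  have hr3 : r ≤ 3 := by nlinarith
  rcases eq_or_lt_of_le hx0 with h0 | h0
  · have hset : {s : ℝ | x ≤ Cdf ubMeas phiC f1 s true} = Set.univ := by
      ext s; simpa [← h0] using cdf_nonneg s true
    have hr9 : r = 1 := by nlinarith
    rw [quantileR, hset, hr9]
    rw [Real.sInf_of_not_bddBelow ?_]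
    · norm_num
    · intro ⟨l, hl⟩
      have := hl (Set.mem_univ (l - 1))
      linarith
  · set s1 : ℝ := -(1 / 2) + r / 2 with hs1
    clear_value s1
    have hs10 : 0 ≤ s1 := by rw [hs1]; linarith
    have hs11 : s1 ≤ 1 := by rw [hs1]; linarith
    have hq : (s1 + s1 ^ 2) / 2 = x := by
      rw [hs1]; linear_combination (1/8 : ℝ) * hr2
    have hval : Cdf ubMeas phiC f1 s1 true = x := by
      rw [cdf_true hs10 hs11]; exact hq
    have hmem : x ≤ Cdf ubMeas phiC f1 s1 true := hval.ge
    have hlb : ∀ t ∈ {s : ℝ | x ≤ Cdf ubMeas phiC f1 s true}, s1 ≤ t := by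
      intro t ht
      simp only [Set.mem_setOf_eq] at ht
      by_contra hlt
      push_neg at hlt
      rcases lt_or_ge t 0 with h | h
      · rw [cdf_neg h] at ht; linarith
      · have ht1 : t ≤ 1 := hlt.le.trans hs11
        rw [cdf_true h ht1] at ht
        nlinarith [hq, ht, mul_pos (by linarith : (0:ℝ) < s1 - t)
          (by linarith : (0:ℝ) < 1 + s1 + t)]
    rw [quantileR]
    exact le_antisymm (csInf_le ⟨s1, hlb⟩ hmem) (le_csInf ⟨s1, hmem⟩ hlb)

lemma sqrt7_facts : Real.sqrt 7 ^ 2 = 7 ∧ 2 ≤ Real.sqrt 7 ∧ Real.sqrt 7 ≤ 3 := by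
  have h : Real.sqrt 7 ^ 2 = 7 := Real.sq_sqrt (by norm_num)
  have hn : 0 ≤ Real.sqrt 7 := Real.sqrt_nonneg _
  exact ⟨h, by nlinarith, by nlinarith⟩

lemma sqrt3_facts : Real.sqrt 3 ^ 2 = 3 ∧ 1 ≤ Real.sqrt 3 ∧ Real.sqrt 3 ≤ 2 := by
  have h : Real.sqrt 3 ^ 2 = 3 := Real.sq_sqrt (by norm_num)
  have hn : 0 ≤ Real.sqrt 3 := Real.sqrt_nonneg _
  exact ⟨h, by nlinarith, by nlinarith⟩

lemma sqrt7_sub_sqrt3_ne_one : Real.sqrt 7 - Real.sqrt 3 ≠ 1 := by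
  intro h
  obtain ⟨h7, h72, h73⟩ := sqrt7_facts
  obtain ⟨h3, h31, h32⟩ := sqrt3_facts
  have h73' : Real.sqrt 7 = 1 + Real.sqrt 3 := by linarith
  have : (7 : ℝ) = (1 + Real.sqrt 3) ^ 2 := by rw [← h73']; exact h7.symm
  nlinarith

/-- Computation of `qfun` at `x = 1/4`, `y = false`. -/
lemma qfun_false : qfun ubMeas ubPrior ubObs phiC f1 (1 / 4) false
    = Real.sqrt 7 / 2 - 1 := by
  obtain ⟨h7, h72, h73⟩ := sqrt7_facts
  set s0 : ℝ := 3 / 2 - Real.sqrt 7 / 2 with hs0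
  clear_value s0
  have hs00 : 0 ≤ s0 := by rw [hs0]; linarith
  have hs01 : s0 ≤ 1 := by rw [hs0]; linarith
  have hq : (3 * s0 - s0 ^ 2) / 2 = 1 / 4 := by
    rw [hs0]; linear_combination (-1/8 : ℝ) * h7
  rw [qfun]
  have hcong : ∀ θ ∈ Set.Icc (0 : ℝ) 1,
      contRank ubMeas phiC f1 (1 / 4) θ false * post ubMeas ubPrior ubObs θ false
      = (Set.Iic s0).indicator (fun θ : ℝ => 2 + (-2) * θ) θ := by
    intro θ hθ
    rw [contRank, dtie_zero, if_pos rfl, post_false]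
    have hcdf : Cdf ubMeas phiC f1 (f1 θ false) false = (3 * θ - θ ^ 2) / 2 := by
      rw [show f1 θ false = θ from rfl, cdf_false hθ.1 hθ.2]
    rw [hcdf, Set.indicator_apply]
    by_cases hle : θ ≤ s0
    · rw [if_pos ?_, if_pos (Set.mem_Iic.mpr hle)]
      · ring
      · nlinarith [hθ.1, hθ.2, hq, mul_nonneg (by linarith : (0:ℝ) ≤ s0 - θ)
          (by linarith [hθ.1] : (0:ℝ) ≤ 3 - s0 - θ)]
    · push_neg at hle
      rw [if_neg ?_, if_neg (fun hmem => absurd (Set.mem_Iic.mp hmem) (not_le.mpr hle))]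
      · ring
      · push_neg
        nlinarith [hθ.2, hq, mul_pos (by linarith : (0:ℝ) < θ - s0)
          (by linarith [hθ.2] : (0:ℝ) < 3 - θ - s0)]
  have hrw : (∫ θt, contRank ubMeas phiC f1 (1 / 4) θt false
        * post ubMeas ubPrior ubObs θt false ∂ubMeas)
      = ∫ θt in Set.Icc (0:ℝ) 1, (Set.Iic s0).indicator (fun θ : ℝ => 2 + (-2) * θ) θt :=
    setIntegral_congr_fun measurableSet_Icc hcong
  rw [hrw,
    MeasureTheory.integral_indicator measurableSet_Iic,
    Measure.restrict_restrict measurableSet_Iic,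
    show Set.Iic s0 ∩ Set.Icc (0:ℝ) 1 = Set.Icc 0 s0 by
      ext θ
      simp only [Set.mem_inter_iff, Set.mem_Iic, Set.mem_Icc]
      constructor
      · rintro ⟨h, h0', _⟩; exact ⟨h0', h⟩
      · rintro ⟨h0', h⟩; exact ⟨h, h0', h.trans hs01⟩,
    integ_lin _ _ _ _ hs00]
  rw [hs0]; linear_combination (-1/4 : ℝ) * h7

/-- Computation of `qfun` at `x = 1/4`, `y = true`. -/
lemma qfun_true : qfun ubMeas ubPrior ubObs phiC f1 (1 / 4) true
    = 1 - Real.sqrt 3 / 2 := by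
  obtain ⟨h3, h31, h32⟩ := sqrt3_facts
  set s1 : ℝ := -(1 / 2) + Real.sqrt 3 / 2 with hs1
  clear_value s1
  have hs10 : 0 ≤ s1 := by rw [hs1]; linarith
  have hs11 : s1 ≤ 1 := by rw [hs1]; linarith
  have hq : (s1 + s1 ^ 2) / 2 = 1 / 4 := by
    rw [hs1]; linear_combination (1/8 : ℝ) * h3
  rw [qfun]
  have hcong : ∀ θ ∈ Set.Icc (0 : ℝ) 1,
      contRank ubMeas phiC f1 (1 / 4) θ true * post ubMeas ubPrior ubObs θ true
      = (Set.Iic s1).indicator (fun θ : ℝ => 0 + 2 * θ) θ := by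
    intro θ hθ
    rw [contRank, dtie_zero, if_pos rfl, post_true]
    have hcdf : Cdf ubMeas phiC f1 (f1 θ true) true = (θ + θ ^ 2) / 2 := by
      rw [show f1 θ true = θ from rfl, cdf_true hθ.1 hθ.2]
    rw [hcdf, Set.indicator_apply]
    by_cases hle : θ ≤ s1
    · rw [if_pos ?_, if_pos (Set.mem_Iic.mpr hle)]
      · ring
      · nlinarith [hθ.1, hq, mul_nonneg (by linarith : (0:ℝ) ≤ s1 - θ)
          (by linarith [hθ.1] : (0:ℝ) ≤ 1 + s1 + θ)]
    · push_neg at hle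
      rw [if_neg ?_, if_neg (fun hmem => absurd (Set.mem_Iic.mp hmem) (not_le.mpr hle))]
      · ring
      · push_neg
        nlinarith [hθ.1, hq, mul_pos (by linarith : (0:ℝ) < θ - s1)
          (by linarith [hθ.1] : (0:ℝ) < 1 + θ + s1)]
  have hrw : (∫ θt, contRank ubMeas phiC f1 (1 / 4) θt true
        * post ubMeas ubPrior ubObs θt true ∂ubMeas)
      = ∫ θt in Set.Icc (0:ℝ) 1, (Set.Iic s1).indicator (fun θ : ℝ => 0 + 2 * θ) θt :=
    setIntegral_congr_fun measurableSet_Icc hcong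
  rw [hrw,
    MeasureTheory.integral_indicator measurableSet_Iic,
    Measure.restrict_restrict measurableSet_Iic,
    show Set.Iic s1 ∩ Set.Icc (0:ℝ) 1 = Set.Icc 0 s1 by
      ext θ
      simp only [Set.mem_inter_iff, Set.mem_Iic, Set.mem_Icc]
      constructor
      · rintro ⟨h, h0', _⟩; exact ⟨h0', h⟩
      · rintro ⟨h0', h⟩; exact ⟨h, h0', h.trans hs11⟩,
    integ_lin _ _ _ _ hs10]
  rw [hs1]; linear_combination (1/4 : ℝ) * h3

instance : IsFiniteMeasure (Measure.count : Measure Bool) := by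
  constructor
  rw [Measure.count_apply_finite _ Set.finite_univ]
  simp

lemma integral_count_bool (g : Bool → ℝ) :
    ∫ y, g y ∂(Measure.count : Measure Bool) = g false + g true := by
  rw [integral_fintype Integrable.of_finite]
  simp [Measure.real, Measure.count_singleton]
  ring

theorem convex_combination_fails_SBC :
    (¬ PassesContSBC ubMeas Measure.count ubPrior ubObs phiC f1)
    ∧ (∀ x ∈ Set.Icc (0 : ℝ) 1,
        quantileR ubMeas phiC f1 x false = 3 / 2 - Real.sqrt (9 - 8 * x) / 2
        ∧ quantileR ubMeas phiC f1 x true = -(1 / 2) + Real.sqrt (1 + 8 * x) / 2)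
    ∧ (∃ x ∈ Set.Icc (0 : ℝ) 1,
        (2 * (3 / 2 - Real.sqrt (9 - 8 * x) / 2)
            - (3 / 2 - Real.sqrt (9 - 8 * x) / 2) ^ 2)
          + (-(1 / 2) + Real.sqrt (1 + 8 * x) / 2) ^ 2 ≠ 2 * x) := by
  refine ⟨?_, ?_, ?_⟩
  · intro hpass
    have h := hpass (1 / 4) (by norm_num)
    rw [integral_count_bool, qfun_false, qfun_true, marg_false, marg_true] at h
    apply sqrt7_sub_sqrt3_ne_one
    linarith
  · intro x hx
    exact ⟨quantile_false hx.1 hx.2, quantile_true hx.1 hx.2⟩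
  · refine ⟨1 / 4, by norm_num, ?_⟩
    rw [show (9 : ℝ) - 8 * (1 / 4) = 7 by norm_num,
      show (1 : ℝ) + 8 * (1 / 4) = 3 by norm_num]
    obtain ⟨h7, _, _⟩ := sqrt7_facts
    obtain ⟨h3, _, _⟩ := sqrt3_facts
    intro h
    apply sqrt7_sub_sqrt3_ne_one
    linear_combination 2 * h + (1 / 2) * h7 - (1 / 2) * h3

end SBC
end
end
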